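/- arXiv:2006.15694 — 4 statements merged into one kernel-verified Lean document; each statement's English description precedes it below -/
import Mathlib

section
/- Let G be a graph, ℂ and ℂ' collections of edge-tangles in G, and 𝓢 a (ℂ,ℂ')-segregator. Then there exists a (ℂ,ℂ')-segregator 𝓢* that is a cross-free family and satisfies ⋃_{[A,B]∈𝓢} A = ⋃_{[A,B]∈𝓢*} A. -/
/-- A finite multigraph (loops and parallel edges allowed): each edge in `E`
has an unordered pair of endpoints in `V`. -/
structure Multigraph (V E : Type) where
  ends : E → Sym2 V

namespace Multigraph

variable {V E : Type}

/-- The edge `e` has an end in the vertex set `A`. -/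
def incident (G : Multigraph V E) (A : Set V) (e : E) : Prop :=
  ∃ x ∈ G.ends e, x ∈ A

/-- The edge `e` has one end in `A` and one end in `B`. -/
def crosses (G : Multigraph V E) (A B : Set V) (e : E) : Prop :=
  G.incident A e ∧ G.incident B e

/-- The order of the edge-cut `[A,B]`: the number of edges with one end in `A`
and one end in `B`. -/
noncomputable def cutOrder (G : Multigraph V E) (A B : Set V) : ℕ :=
  {e | G.crosses A B e}.ncard

/-- `[A,B]` is an edge-cut of `G`: an ordered pair of disjoint vertex sets
covering all vertices. -/
def IsCut (G : Multigraph V E) (A B : Set V) : Prop :=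
  Disjoint A B ∧ A ∪ B = Set.univ

end Multigraph

/-- An edge-tangle in `G` (of some order `ord`): a set of edge-cuts of order
less than `ord` satisfying axioms (E1)-(E3). -/
structure GTangle {V E : Type} (G : Multigraph V E) where
  ord : ℕ
  mem : Set V → Set V → Prop
  isCut_of_mem : ∀ A B, mem A B → G.IsCut A B
  order_lt_of_mem : ∀ A B, mem A B → G.cutOrder A B < ord
  e1 : ∀ A B, G.IsCut A B → G.cutOrder A B < ord → mem A B ∨ mem B A
  e2 : ∀ A₁ B₁ A₂ B₂ A₃ B₃, mem A₁ B₁ → mem A₂ B₂ → mem A₃ B₃ →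
    (B₁ ∩ B₂ ∩ B₃).Nonempty
  e3 : ∀ A B, mem A B → ord ≤ {e | G.incident B e}.ncard

/-- `[A,B]` is a `(Cs,ℰ)`-separator: `[A,B] ∈ ℰ' − ℰ` and `[B,A] ∈ ℰ − ℰ'` for
every `ℰ' ∈ Cs`. -/
def IsSep {V E : Type} {G : Multigraph V E} (Cs : Set (GTangle G))
    (ℰ : GTangle G) (A B : Set V) : Prop :=
  ∀ ℰ' ∈ Cs, (ℰ'.mem A B ∧ ¬ ℰ.mem A B) ∧ (ℰ.mem B A ∧ ¬ ℰ'.mem B A)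

/-- `[A,B]` is a minimum `(Cs,ℰ)`-separator: a `(Cs,ℰ)`-separator of minimum
order. -/
def IsMinSep {V E : Type} {G : Multigraph V E} (Cs : Set (GTangle G))
    (ℰ : GTangle G) (A B : Set V) : Prop :=
  IsSep Cs ℰ A B ∧ ∀ A' B' : Set V, IsSep Cs ℰ A' B' →
    G.cutOrder A B ≤ G.cutOrder A' B'

/-- A `(Cs,Cs')`-segregator: a set `𝓢` of edge-cuts such that every member is a
minimum `(Cs,ℰ')`-separator for some `ℰ' ∈ Cs'`, and for every `ℰ' ∈ Cs'` there
exists `[A,B] ∈ 𝓢` such that either `[A,B]` is a minimum `(Cs,ℰ')`-separator,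
or `A' ⊆ A` for some minimum `(Cs,ℰ')`-separator `[A',B']`. -/
def IsSegregator {V E : Type} {G : Multigraph V E}
    (Cs Cs' : Set (GTangle G)) (𝓢 : Set (Set V × Set V)) : Prop :=
  (∀ p ∈ 𝓢, ∃ ℰ' ∈ Cs', IsMinSep Cs ℰ' p.1 p.2) ∧
  (∀ ℰ' ∈ Cs', ∃ p ∈ 𝓢, IsMinSep Cs ℰ' p.1 p.2 ∨
    ∃ A' B' : Set V, IsMinSep Cs ℰ' A' B' ∧ A' ⊆ p.1)

/-- A family of edge-cuts is cross-free if the first components of any two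
distinct members are disjoint. -/
def CrossFree {V : Type} (𝓓 : Set (Set V × Set V)) : Prop :=
  ∀ p ∈ 𝓓, ∀ q ∈ 𝓓, p ≠ q → Disjoint p.1 q.1

/-!
Cut order is submodular and posimodular. Hence, if `[A,B]` and `[C,D]` are minimum separators
for `ℰ₁` and `ℰ₂`, one of the corners `[A ∪ C, B ∩ D]`, `[C ∩ B, D ∪ A]`, `[A ∩ C, B ∪ D]` is
again a minimum separator for `ℰ₂`, and one of the first two is when `[A,B]` has the smaller
order. So two crossing members of a family of minimum separators can be merged, or the one of
larger order cut down to its part outside the other; either way `⋃ A` stays and `∑ |A|` drops,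
which yields a cross-free family with the same union. Among such families, one serving a
maximal set of tangles serves every `ℰ' ∈ Cs'`: a minimum `ℰ'`-separator inside the union that
is crossed by the fewest members crosses none of them (or `ℰ'` is already served inside a
member), and then it can replace the members it contains.
-/

namespace Multigraph

variable {V E : Type} {G : Multigraph V E} {A B C D : Set V}

theorem crosses_comm {e : E} : G.crosses A B e ↔ G.crosses B A e :=
  and_comm

theorem cutOrder_comm (G : Multigraph V E) (A B : Set V) : G.cutOrder A B = G.cutOrder B A := by
  simp only [cutOrder, crosses_comm]

theorem cutOrder_submod [Finite E] :
    G.cutOrder (A ∪ C) (B ∩ D) + G.cutOrder (A ∩ C) (B ∪ D) ≤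
      G.cutOrder A B + G.cutOrder C D := by
  have hunion : {e | G.crosses (A ∪ C) (B ∩ D) e} ∪ {e | G.crosses (A ∩ C) (B ∪ D) e} ⊆
      {e | G.crosses A B e} ∪ {e | G.crosses C D e} := by
    rintro e (⟨⟨x, hx, hxA | hxC⟩, ⟨y, hy, hyB, hyD⟩⟩ |
      ⟨⟨x, hx, hxA, hxC⟩, ⟨y, hy, hyB | hyD⟩⟩)
    exacts [.inl ⟨⟨x, hx, hxA⟩, ⟨y, hy, hyB⟩⟩, .inr ⟨⟨x, hx, hxC⟩, ⟨y, hy, hyD⟩⟩,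
      .inl ⟨⟨x, hx, hxA⟩, ⟨y, hy, hyB⟩⟩, .inr ⟨⟨x, hx, hxC⟩, ⟨y, hy, hyD⟩⟩]
  have hinter : {e | G.crosses (A ∪ C) (B ∩ D) e} ∩ {e | G.crosses (A ∩ C) (B ∪ D) e} ⊆
      {e | G.crosses A B e} ∩ {e | G.crosses C D e} := by
    rintro e ⟨⟨-, ⟨y, hy, hyB, hyD⟩⟩, ⟨⟨x, hx, hxA, hxC⟩, -⟩⟩
    exact ⟨⟨⟨x, hx, hxA⟩, ⟨y, hy, hyB⟩⟩, ⟨⟨x, hx, hxC⟩, ⟨y, hy, hyD⟩⟩⟩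
  calc _ = (_ ∪ _ : Set E).ncard + (_ ∩ _ : Set E).ncard :=
        (Set.ncard_union_add_ncard_inter _ _).symm
    _ ≤ (_ ∪ _ : Set E).ncard + (_ ∩ _ : Set E).ncard :=
      add_le_add (Set.ncard_le_ncard hunion) (Set.ncard_le_ncard hinter)
    _ = _ := Set.ncard_union_add_ncard_inter _ _

theorem cutOrder_posimod [Finite E] :
    G.cutOrder (A ∩ D) (B ∪ C) + G.cutOrder (C ∩ B) (D ∪ A) ≤
      G.cutOrder A B + G.cutOrder C D := by
  have := cutOrder_submod (G := G) (A := A) (B := B) (C := D) (D := C)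
  rw [cutOrder_comm G D, cutOrder_comm G (A ∪ D), Set.union_comm A, Set.inter_comm B] at this
  rwa [add_comm]

theorem isCut_iff : G.IsCut A B ↔ B = Aᶜ := by
  rw [IsCut, Set.disjoint_iff_inter_eq_empty, eq_comm (b := Aᶜ)]
  constructor
  · rintro ⟨h₁, h₂⟩; tauto_set
  · rintro rfl; constructor <;> tauto_set

theorem IsCut.symm (h : G.IsCut A B) : G.IsCut B A :=
  ⟨h.1.symm, Set.union_comm A B ▸ h.2⟩

theorem IsCut.union_inter (h₁ : G.IsCut A B) (h₂ : G.IsCut C D) :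
    G.IsCut (A ∪ C) (B ∩ D) := by
  rw [isCut_iff] at *
  rw [h₁, h₂, Set.compl_union]

end Multigraph

open Multigraph

namespace GTangle

variable {V E : Type} {G : Multigraph V E} (ℰ : GTangle G) {P Q X Y X₁ Y₁ X₂ Y₂ : Set V}

theorem not_mem_swap (h : ℰ.mem X Y) : ¬ ℰ.mem Y X := fun h' => by
  obtain ⟨v, ⟨hvY, hvX⟩, -⟩ := ℰ.e2 _ _ _ _ _ _ h h' h'
  exact Set.disjoint_left.mp (ℰ.isCut_of_mem _ _ h).1 hvX hvY

theorem mem_of_inter_subset (h₁ : ℰ.mem X₁ Y₁) (h₂ : ℰ.mem X₂ Y₂)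
    (hPQ : G.IsCut P Q) (hord : G.cutOrder P Q < ℰ.ord) (hY : Y₁ ∩ Y₂ ⊆ Q) : ℰ.mem P Q := by
  refine (ℰ.e1 P Q hPQ hord).resolve_right fun hQP => ?_
  obtain ⟨v, hv, hvP⟩ := ℰ.e2 _ _ _ _ _ _ h₁ h₂ hQP
  exact Set.disjoint_left.mp hPQ.1 hvP (hY hv)

theorem mem_of_subset (h : ℰ.mem X Y) (hPQ : G.IsCut P Q) (hord : G.cutOrder P Q < ℰ.ord)
    (hY : Y ⊆ Q) : ℰ.mem P Q :=
  ℰ.mem_of_inter_subset h h hPQ hord ((Set.inter_self Y).symm ▸ hY)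

end GTangle

section Separators

variable {V E : Type} {G : Multigraph V E} {Cs : Set (GTangle G)} {ℰ ℰ₁ ℰ₂ : GTangle G}
  {A B C D P Q X Y : Set V}

theorem isSep_of_forall_mem (hCs : ∀ ℰ' ∈ Cs, ℰ'.mem A B) (h : ℰ.mem B A) :
    IsSep Cs ℰ A B := fun ℰ' hℰ' =>
  ⟨⟨hCs ℰ' hℰ', ℰ.not_mem_swap h⟩, ⟨h, ℰ'.not_mem_swap (hCs ℰ' hℰ')⟩⟩

namespace IsSep

theorem mem (h : IsSep Cs ℰ A B) {ℰ' : GTangle G} (hℰ' : ℰ' ∈ Cs) : ℰ'.mem A B :=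
  (h ℰ' hℰ').1.1

theorem mem_swap (h : IsSep Cs ℰ A B) (hCs : Cs.Nonempty) : ℰ.mem B A :=
  (h _ hCs.some_mem).2.1

theorem isCut (h : IsSep Cs ℰ A B) (hCs : Cs.Nonempty) : G.IsCut A B :=
  hCs.some.isCut_of_mem _ _ (h.mem hCs.some_mem)

theorem cutOrder_lt (h : IsSep Cs ℰ A B) {ℰ' : GTangle G} (hℰ' : ℰ' ∈ Cs) :
    G.cutOrder A B < ℰ'.ord :=
  ℰ'.order_lt_of_mem _ _ (h.mem hℰ')

theorem cutOrder_lt_ord (h : IsSep Cs ℰ A B) (hCs : Cs.Nonempty) : G.cutOrder A B < ℰ.ord :=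
  cutOrder_comm G A B ▸ ℰ.order_lt_of_mem _ _ (h.mem_swap hCs)

theorem forall_mem_of_subset (h : IsSep Cs ℰ A B) (hPQ : G.IsCut P Q) (hBQ : B ⊆ Q)
    (hle : G.cutOrder P Q ≤ G.cutOrder A B) : ∀ ℰ' ∈ Cs, ℰ'.mem P Q :=
  fun ℰ' hℰ' => ℰ'.mem_of_subset (h.mem hℰ') hPQ (hle.trans_lt (h.cutOrder_lt hℰ')) hBQ

theorem of_subset (h : IsSep Cs ℰ C D) (hCs : Cs.Nonempty) (hPQ : G.IsCut P Q) (hDQ : D ⊆ Q)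
    (hXY : ℰ.mem X Y) (hY : C ∩ Y ⊆ P) (hle : G.cutOrder P Q ≤ G.cutOrder C D) :
    IsSep Cs ℰ P Q :=
  isSep_of_forall_mem (h.forall_mem_of_subset hPQ hDQ hle) <|
    ℰ.mem_of_inter_subset (h.mem_swap hCs) hXY hPQ.symm
      (cutOrder_comm G P Q ▸ hle.trans_lt (h.cutOrder_lt_ord hCs)) hY

theorem union (h₁ : IsSep Cs ℰ₁ A B) (h₂ : IsSep Cs ℰ₂ C D) (hCs : Cs.Nonempty)
    (hle : G.cutOrder (A ∪ C) (B ∩ D) ≤ G.cutOrder C D) :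
    IsSep Cs ℰ₂ (A ∪ C) (B ∩ D) := by
  have hcut := (h₁.isCut hCs).union_inter (h₂.isCut hCs)
  refine isSep_of_forall_mem (fun ℰ' hℰ' => ?_) ?_
  · exact ℰ'.mem_of_inter_subset (h₁.mem hℰ') (h₂.mem hℰ') hcut
      (hle.trans_lt (h₂.cutOrder_lt hℰ')) subset_rfl
  · exact ℰ₂.mem_of_subset (h₂.mem_swap hCs) hcut.symm
      (cutOrder_comm G _ _ ▸ hle.trans_lt (h₂.cutOrder_lt_ord hCs)) Set.subset_union_right

end IsSep

end Separators

namespace IsMinSep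

variable {V E : Type} {G : Multigraph V E} {Cs : Set (GTangle G)} {ℰ ℰ₁ ℰ₂ : GTangle G}
  {A B C D P Q X Y : Set V}

theorem of_isSep_le (h : IsMinSep Cs ℰ A B) (hs : IsSep Cs ℰ P Q)
    (hle : G.cutOrder P Q ≤ G.cutOrder A B) : IsMinSep Cs ℰ P Q :=
  ⟨hs, fun _ _ hs' => hle.trans (h.2 _ _ hs')⟩

theorem of_subset (h : IsMinSep Cs ℰ C D) (hCs : Cs.Nonempty) (hPQ : G.IsCut P Q) (hDQ : D ⊆ Q)
    (hXY : ℰ.mem X Y) (hY : C ∩ Y ⊆ P) (hle : G.cutOrder P Q ≤ G.cutOrder C D) :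
    IsMinSep Cs ℰ P Q :=
  h.of_isSep_le (h.1.of_subset hCs hPQ hDQ hXY hY hle) hle

theorem le_cutOrder_of_subset (h : IsMinSep Cs ℰ A B) (hCs : Cs.Nonempty) (hPQ : G.IsCut P Q)
    (hBQ : B ⊆ Q) (hXY : ℰ.mem X Y) (hY : A ∩ Y ⊆ P) : G.cutOrder A B ≤ G.cutOrder P Q :=
  not_lt.mp fun hlt => hlt.not_ge (h.2 P Q (h.1.of_subset hCs hPQ hBQ hXY hY hlt.le))

theorem mem_of_cutOrder_lt (h : IsMinSep Cs ℰ A B) (hCs : Cs.Nonempty) (hPQ : G.IsCut P Q)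
    (hlt : G.cutOrder P Q < G.cutOrder A B) (hmem : ∀ ℰ' ∈ Cs, ℰ'.mem P Q) : ℰ.mem P Q :=
  (ℰ.e1 P Q hPQ (hlt.trans (h.1.cutOrder_lt_ord hCs))).resolve_right fun hQP =>
    hlt.not_ge (h.2 P Q (isSep_of_forall_mem hmem hQP))

theorem union_of_le (h₁ : IsSep Cs ℰ₁ A B) (h₂ : IsMinSep Cs ℰ₂ C D) (hCs : Cs.Nonempty)
    (hle : G.cutOrder (A ∪ C) (B ∩ D) ≤ G.cutOrder C D) :
    IsMinSep Cs ℰ₂ (A ∪ C) (B ∩ D) :=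
  h₂.of_isSep_le (h₁.union h₂.1 hCs hle) hle

theorem le_cutOrder_union (h₁ : IsSep Cs ℰ₁ A B) (h₂ : IsMinSep Cs ℰ₂ C D)
    (hCs : Cs.Nonempty) :
    G.cutOrder C D ≤ G.cutOrder (A ∪ C) (B ∩ D) :=
  not_lt.mp fun hlt => hlt.not_ge (h₂.2 _ _ (h₁.union h₂.1 hCs hlt.le))

variable [Finite E]

theorem diff_of_lt (h₁ : IsMinSep Cs ℰ₁ A B) (h₂ : IsMinSep Cs ℰ₂ C D) (hCs : Cs.Nonempty)
    (hAB : G.cutOrder A B < G.cutOrder (A ∪ C) (B ∩ D))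
    (hCD : G.cutOrder C D < G.cutOrder (A ∪ C) (B ∩ D)) :
    IsMinSep Cs ℰ₂ (C ∩ B) (D ∪ A) := by
  obtain rfl := isCut_iff.mp (h₁.1.isCut hCs)
  obtain rfl := isCut_iff.mp (h₂.1.isCut hCs)
  have hsub := cutOrder_submod (G := G) (A := A) (B := Aᶜ) (C := C) (D := Cᶜ)
  have hposi := cutOrder_posimod (G := G) (A := A) (B := Aᶜ) (C := C) (D := Cᶜ)
  -- Submodularity puts `[A ∩ C, B ∪ D]` below both orders, so all tangles involved orient it
  -- alike; then `[A ∩ D, B ∪ C]` is no better than `[A,B]`, and posimodularity bounds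
  -- `[C ∩ B, D ∪ A]` by `|C,D|`.
  have hI : G.IsCut (A ∩ C) (Aᶜ ∪ Cᶜ) := isCut_iff.mpr (by tauto_set)
  have hI_Cs := h₁.1.forall_mem_of_subset hI Set.subset_union_left (by omega)
  have hI₁ := h₁.mem_of_cutOrder_lt hCs hI (by omega) hI_Cs
  have hI₂ := h₂.mem_of_cutOrder_lt hCs hI (by omega) hI_Cs
  have hAD : G.cutOrder A Aᶜ ≤ G.cutOrder (A ∩ Cᶜ) (Aᶜ ∪ C) :=
    h₁.le_cutOrder_of_subset hCs (isCut_iff.mpr (by tauto_set)) Set.subset_union_left hI₁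
      (by tauto_set)
  exact h₂.of_subset hCs (isCut_iff.mpr (by tauto_set)) Set.subset_union_left hI₂
    (by tauto_set) (by omega)

theorem diff_or_inter_of_lt (h₁ : IsMinSep Cs ℰ₁ A B) (h₂ : IsMinSep Cs ℰ₂ C D)
    (hCs : Cs.Nonempty) (hlt : G.cutOrder C D < G.cutOrder A B)
    (hle : G.cutOrder (A ∪ C) (B ∩ D) ≤ G.cutOrder A B) :
    IsMinSep Cs ℰ₂ (C ∩ B) (D ∪ A) ∨ IsMinSep Cs ℰ₂ (A ∩ C) (B ∪ D) := by
  obtain rfl := isCut_iff.mp (h₁.1.isCut hCs)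
  obtain rfl := isCut_iff.mp (h₂.1.isCut hCs)
  have hsub := cutOrder_submod (G := G) (A := A) (B := Aᶜ) (C := C) (D := Cᶜ)
  have hposi := cutOrder_posimod (G := G) (A := A) (B := Aᶜ) (C := C) (D := Cᶜ)
  have hCD₁ : ℰ₁.mem C Cᶜ :=
    h₁.mem_of_cutOrder_lt hCs (isCut_iff.mpr rfl) hlt fun _ hℰ => h₂.1.mem hℰ
  have hAD : G.cutOrder A Aᶜ ≤ G.cutOrder (A ∩ Cᶜ) (Aᶜ ∪ C) :=
    h₁.le_cutOrder_of_subset hCs (isCut_iff.mpr (by tauto_set)) Set.subset_union_left hCD₁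
      (by tauto_set)
  have hCB : G.IsCut (C ∩ Aᶜ) (Cᶜ ∪ A) := isCut_iff.mpr (by tauto_set)
  rcases ℰ₂.e1 _ _ hCB ((show _ ≤ G.cutOrder C Cᶜ by omega).trans_lt
    (h₂.1.cutOrder_lt_ord hCs)) with hin | hout
  · -- `ℰ₂` does not separate along `[C ∩ B, D ∪ A]`, but the union corner has order exactly
    -- `|A,B|`, so submodularity bounds `[A ∩ C, B ∪ D]` by `|C,D|`.
    have hU : G.cutOrder A Aᶜ ≤ G.cutOrder (A ∪ C) (Aᶜ ∩ Cᶜ) := by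
      simpa only [Set.union_comm C, Set.inter_comm Cᶜ] using le_cutOrder_union h₂.1 h₁ hCs
    exact .inr (h₂.of_subset hCs (isCut_iff.mpr (by tauto_set)) Set.subset_union_right hin
      (by tauto_set) (by omega))
  · exact .inl (h₂.of_subset hCs hCB Set.subset_union_left hout (by tauto_set) (by omega))

theorem union_or_diff (h₁ : IsMinSep Cs ℰ₁ A B) (h₂ : IsMinSep Cs ℰ₂ C D)
    (hCs : Cs.Nonempty) (hle : G.cutOrder A B ≤ G.cutOrder C D) :
    IsMinSep Cs ℰ₂ (A ∪ C) (B ∩ D) ∨ IsMinSep Cs ℰ₂ (C ∩ B) (D ∪ A) := by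
  rcases le_or_gt (G.cutOrder (A ∪ C) (B ∩ D)) (G.cutOrder C D) with hU | hU
  · exact .inl (union_of_le h₁.1 h₂ hCs hU)
  · exact .inr (h₁.diff_of_lt h₂ hCs (hle.trans_lt hU) hU)

theorem union_or_diff_or_inter (h₁ : IsMinSep Cs ℰ₁ A B) (h₂ : IsMinSep Cs ℰ₂ C D)
    (hCs : Cs.Nonempty) :
    IsMinSep Cs ℰ₂ (A ∪ C) (B ∩ D) ∨ IsMinSep Cs ℰ₂ (C ∩ B) (D ∪ A) ∨
      IsMinSep Cs ℰ₂ (A ∩ C) (B ∪ D) := by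
  rcases le_or_gt (G.cutOrder A B) (G.cutOrder C D) with hle | hlt
  · exact (h₁.union_or_diff h₂ hCs hle).imp_right .inl
  rcases le_or_gt (G.cutOrder (A ∪ C) (B ∩ D)) (G.cutOrder A B) with hU | hU
  · exact .inr (h₁.diff_or_inter_of_lt h₂ hCs hlt hU)
  · exact .inr (.inl (h₁.diff_of_lt h₂ hCs hU (hlt.trans hU)))

end IsMinSep

section Families

variable {V E : Type} {G : Multigraph V E} {Cs Cs' : Set (GTangle G)} {ℰ : GTangle G}
  {S T T' : Set (Set V × Set V)} {p q r x : Set V × Set V}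

def IsMinSepFamily (Cs Cs' : Set (GTangle G)) (T : Set (Set V × Set V)) : Prop :=
  ∀ p ∈ T, ∃ ℰ' ∈ Cs', IsMinSep Cs ℰ' p.1 p.2

def Serves (Cs : Set (GTangle G)) (T : Set (Set V × Set V)) (ℰ : GTangle G) : Prop :=
  ∃ p ∈ T, IsMinSep Cs ℰ p.1 p.2 ∨ ∃ A B : Set V, IsMinSep Cs ℰ A B ∧ A ⊆ p.1

theorem isSegregator_iff :
    IsSegregator Cs Cs' T ↔ IsMinSepFamily Cs Cs' T ∧ ∀ ℰ ∈ Cs', Serves Cs T ℰ :=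
  Iff.rfl

theorem IsMinSepFamily.mono (hT : IsMinSepFamily Cs Cs' T) (h : T' ⊆ T) :
    IsMinSepFamily Cs Cs' T' :=
  fun p hp => hT p (h hp)

theorem IsMinSepFamily.insert_minSep (hT : IsMinSepFamily Cs Cs' T)
    (hr : ∃ ℰ' ∈ Cs', IsMinSep Cs ℰ' r.1 r.2) : IsMinSepFamily Cs Cs' (insert r T) := by
  rintro m (rfl | hm)
  exacts [hr, hT m hm]

theorem Serves.mono (hTT' : ∀ p ∈ T, ∃ q ∈ T', p.1 ⊆ q.1) (h : Serves Cs T ℰ) :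
    Serves Cs T' ℰ := by
  obtain ⟨p, hp, hmin | ⟨A, B, hmin, hA⟩⟩ := h <;> obtain ⟨q, hq, hpq⟩ := hTT' p hp
  · exact ⟨q, hq, .inr ⟨p.1, p.2, hmin, hpq⟩⟩
  · exact ⟨q, hq, .inr ⟨A, B, hmin, hA.trans hpq⟩⟩

theorem Serves.exists_subset_biUnion (h : Serves Cs T ℰ) :
    ∃ A B : Set V, IsMinSep Cs ℰ A B ∧ A ⊆ ⋃ m ∈ T, m.1 := by
  obtain ⟨p, hp, hmin | ⟨A, B, hmin, hA⟩⟩ := h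
  · exact ⟨p.1, p.2, hmin, Set.subset_biUnion_of_mem hp⟩
  · exact ⟨A, B, hmin, hA.trans (Set.subset_biUnion_of_mem hp)⟩

noncomputable def familySize (T : Set (Set V × Set V)) : ℕ :=
  ∑ᶠ m ∈ T, m.1.ncard

theorem familySize_insert_sdiff_lt [Finite V] (hST : S ⊆ T) (h : r.1.ncard < familySize S) :
    familySize (insert r (T \ S)) < familySize T := by
  have hinsert : familySize (insert r (T \ S)) ≤ r.1.ncard + familySize (T \ S) := by
    by_cases hr : r ∈ T \ S
    · rw [Set.insert_eq_of_mem hr]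
      exact Nat.le_add_left _ _
    · rw [familySize, finsum_mem_insert _ hr (Set.toFinite _)]
      rfl
  have hsplit : familySize T = familySize S + familySize (T \ S) := by
    rw [familySize, familySize, familySize, ← finsum_mem_union Set.disjoint_sdiff_right
      (Set.toFinite _) (Set.toFinite _), Set.union_sdiff_cancel hST]
  omega

theorem biUnion_insert_sdiff (hr : r.1 ⊆ ⋃ m ∈ T, m.1)
    (hS : ∀ m ∈ S, m.1 ⊆ r.1 ∪ ⋃ m ∈ T \ S, m.1) :
    ⋃ m ∈ insert r (T \ S), m.1 = ⋃ m ∈ T, m.1 := by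
  rw [Set.biUnion_insert]
  refine (Set.union_subset hr (Set.biUnion_mono Set.sdiff_subset fun _ _ => subset_rfl)).antisymm
    (Set.iUnion₂_subset fun m hm => ?_)
  by_cases hmS : m ∈ S
  · exact hS m hmS
  · exact Set.subset_union_of_subset_right
      (Set.subset_biUnion_of_mem (u := fun m : Set V × Set V => m.1)
        (show m ∈ T \ S from ⟨hm, hmS⟩)) _

theorem IsMinSepFamily.exists_uncross [Finite V] [Finite E] (hT : IsMinSepFamily Cs Cs' T)
    (hCs : Cs.Nonempty) (hp : p ∈ T) (hq : q ∈ T) (hpq : p ≠ q)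
    (hcross : ¬ Disjoint p.1 q.1) :
    ∃ T₂, IsMinSepFamily Cs Cs' T₂ ∧ ⋃ m ∈ T₂, m.1 = ⋃ m ∈ T, m.1 ∧
      familySize T₂ < familySize T := by
  wlog hle : G.cutOrder p.1 p.2 ≤ G.cutOrder q.1 q.2 generalizing p q
  · exact this hq hp hpq.symm (by rwa [disjoint_comm]) (le_of_not_ge hle)
  obtain ⟨ℰp, -, hpmin⟩ := hT p hp
  obtain ⟨ℰq, hℰq, hqmin⟩ := hT q hq
  rcases hpmin.union_or_diff hqmin hCs hle with hunion | hdiff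
  · refine ⟨insert (p.1 ∪ q.1, p.2 ∩ q.2) (T \ {p, q}),
      (hT.mono Set.sdiff_subset).insert_minSep ⟨ℰq, hℰq, hunion⟩,
      biUnion_insert_sdiff ?_ ?_,
      familySize_insert_sdiff_lt (Set.pair_subset hp hq) ?_⟩
    · exact Set.union_subset (Set.subset_biUnion_of_mem hp) (Set.subset_biUnion_of_mem hq)
    · rintro m (rfl | rfl)
      · exact Set.subset_union_left.trans Set.subset_union_left
      · exact Set.subset_union_right.trans Set.subset_union_left
    · rw [familySize, finsum_mem_pair hpq]
      exact Set.ncard_union_lt (Set.toFinite _) (Set.toFinite _) hcross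
  · have hpcut := isCut_iff.mp (hpmin.1.isCut hCs)
    refine ⟨insert (q.1 ∩ p.2, q.2 ∪ p.1) (T \ {q}),
      (hT.mono Set.sdiff_subset).insert_minSep ⟨ℰq, hℰq, hdiff⟩, biUnion_insert_sdiff ?_ ?_,
      familySize_insert_sdiff_lt (Set.singleton_subset_iff.mpr hq) ?_⟩
    · exact Set.inter_subset_left.trans (Set.subset_biUnion_of_mem hq)
    · intro m hm
      rw [Set.mem_singleton_iff.mp hm]
      have hp' : p.1 ⊆ ⋃ m ∈ T \ {q}, m.1 :=
        Set.subset_biUnion_of_mem (u := fun m : Set V × Set V => m.1)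
          (show p ∈ T \ {q} from ⟨hp, hpq⟩)
      intro v hv
      by_cases hvp : v ∈ p.1
      · exact .inr (hp' hvp)
      · exact .inl ⟨hv, hpcut ▸ hvp⟩
    · rw [familySize, finsum_mem_singleton]
      refine Set.ncard_lt_ncard ⟨Set.inter_subset_left, fun hsub => hcross ?_⟩
      exact Set.disjoint_left.mpr fun v hvp hvq => (hpcut ▸ (hsub hvq).2) hvp

theorem IsMinSepFamily.exists_crossFree [Finite V] [Finite E] (hT : IsMinSepFamily Cs Cs' T)
    (hCs : Cs.Nonempty) :
    ∃ T', IsMinSepFamily Cs Cs' T' ∧ CrossFree T' ∧ ⋃ m ∈ T', m.1 = ⋃ m ∈ T, m.1 := by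
  obtain ⟨T', ⟨hT', hU⟩, hmin⟩ := exists_minimalFor_of_wellFoundedLT
    (fun T' => IsMinSepFamily Cs Cs' T' ∧ ⋃ m ∈ T', m.1 = ⋃ m ∈ T, m.1) familySize
    ⟨T, hT, rfl⟩
  refine ⟨T', hT', fun p hp q hq hpq => not_not.mp fun hcross => ?_, hU⟩
  obtain ⟨T₂, hT₂, hU₂, hlt⟩ := hT'.exists_uncross hCs hp hq hpq hcross
  exact hlt.not_ge (hmin ⟨hT₂, hU₂.trans hU⟩ hlt.le)

end Families

section Serving

variable {V E : Type} {G : Multigraph V E} {Cs Cs' : Set (GTangle G)} {ℰ : GTangle G}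
  {T : Set (Set V × Set V)} {m p x : Set V × Set V}

def crossing (T : Set (Set V × Set V)) (X : Set V) : Set (Set V × Set V) :=
  {m ∈ T | ¬ Disjoint m.1 X ∧ ¬ m.1 ⊆ X}

theorem CrossFree.crossing_union_subset (hT : CrossFree T) (hp : p ∈ T) (X : Set V) :
    crossing T (p.1 ∪ X) ⊆ crossing T X \ {p} := by
  rintro m ⟨hm, hmeet, hnsub⟩
  have hmp : m ≠ p := by
    rintro rfl
    exact hnsub Set.subset_union_left
  exact ⟨⟨hm, fun h => hmeet (Set.disjoint_union_right.mpr ⟨hT m hm p hp hmp, h⟩),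
    fun h => hnsub (h.trans Set.subset_union_right)⟩, hmp⟩

theorem CrossFree.crossing_inter_subset (hT : CrossFree T) (hp : p ∈ T) (hcut : p.2 = p.1ᶜ)
    (X : Set V) : crossing T (X ∩ p.2) ⊆ crossing T X \ {p} := by
  rintro m ⟨hm, hmeet, hnsub⟩
  have hmp : m ≠ p := by
    rintro rfl
    exact hmeet (hcut ▸ disjoint_compl_right.mono_right Set.inter_subset_right)
  exact ⟨⟨hm, fun h => hmeet (h.mono_right Set.inter_subset_left),
    fun h => hnsub (Set.subset_inter h (hcut ▸ (hT m hm p hp hmp).subset_compl_right))⟩, hmp⟩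

def absorb (T : Set (Set V × Set V)) (x : Set V × Set V) : Set (Set V × Set V) :=
  insert x {m ∈ T | Disjoint m.1 x.1}

theorem crossFree_absorb (hT : CrossFree T) (x : Set V × Set V) : CrossFree (absorb T x) := by
  rintro a (rfl | ⟨ha, hax⟩) b (rfl | ⟨hb, hbx⟩) hab
  · exact (hab rfl).elim
  · exact hbx.symm
  · exact hax
  · exact hT a ha b hb hab

theorem exists_mem_absorb_superset (hx : crossing T x.1 = ∅) (hm : m ∈ T) :
    ∃ q ∈ absorb T x, m.1 ⊆ q.1 := by
  by_cases hmx : Disjoint m.1 x.1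
  · exact ⟨m, .inr ⟨hm, hmx⟩, subset_rfl⟩
  · exact ⟨x, .inl rfl, not_not.mp fun h =>
      Set.eq_empty_iff_forall_notMem.mp hx m ⟨hm, hmx, h⟩⟩

theorem biUnion_absorb (hx : crossing T x.1 = ∅) :
    ⋃ m ∈ absorb T x, m.1 = x.1 ∪ ⋃ m ∈ T, m.1 := by
  refine (Set.iUnion₂_subset fun m hm => ?_).antisymm (Set.union_subset ?_ ?_)
  · rcases hm with rfl | ⟨hm, -⟩
    exacts [Set.subset_union_left,
      Set.subset_union_of_subset_right (Set.subset_biUnion_of_mem hm) _]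
  · exact Set.subset_biUnion_of_mem (u := fun m : Set V × Set V => m.1) (Set.mem_insert x _)
  · refine Set.iUnion₂_subset fun m hm => ?_
    obtain ⟨q, hq, hmq⟩ := exists_mem_absorb_superset hx hm
    exact hmq.trans (Set.subset_biUnion_of_mem hq)

theorem CrossFree.exists_serves [Finite V] [Finite E] (hcf : CrossFree T)
    (hT : IsMinSepFamily Cs Cs' T) (hCs : Cs.Nonempty) (hℰ : ℰ ∈ Cs') {A₀ B₀ : Set V}
    (hmin : IsMinSep Cs ℰ A₀ B₀) (hA₀ : A₀ ⊆ ⋃ m ∈ T, m.1) :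
    ∃ T', IsMinSepFamily Cs Cs' T' ∧ CrossFree T' ∧ ⋃ m ∈ T', m.1 = ⋃ m ∈ T, m.1 ∧
      (∀ m ∈ T, ∃ q ∈ T', m.1 ⊆ q.1) ∧ Serves Cs T' ℰ := by
  obtain ⟨x, ⟨hx, hxU⟩, hxmin⟩ := exists_minimalFor_of_wellFoundedLT
    (fun x : Set V × Set V => IsMinSep Cs ℰ x.1 x.2 ∧ x.1 ⊆ ⋃ m ∈ T, m.1)
    (fun x => (crossing T x.1).ncard) ⟨(A₀, B₀), hmin, hA₀⟩
  rcases (crossing T x.1).eq_empty_or_nonempty with hx0 | ⟨p, hp⟩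
  · refine ⟨absorb T x, (hT.mono (Set.sep_subset _ _)).insert_minSep ⟨ℰ, hℰ, hx⟩,
      crossFree_absorb hcf x, ?_,
      fun m hm => exists_mem_absorb_superset hx0 hm, x, .inl rfl, .inl hx⟩
    rw [biUnion_absorb hx0, Set.union_eq_right.mpr hxU]
  have hfewer : ∀ y : Set V × Set V, IsMinSep Cs ℰ y.1 y.2 → y.1 ⊆ ⋃ m ∈ T, m.1 →
      crossing T y.1 ⊆ crossing T x.1 \ {p} → False := fun y hy hyU hsub =>
    have hlt := (Set.ncard_le_ncard hsub).trans_lt (Set.ncard_sdiff_singleton_lt_of_mem hp)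
    hlt.not_ge (hxmin ⟨hy, hyU⟩ hlt.le)
  obtain ⟨ℰp, -, hpmin⟩ := hT p hp.1
  rcases hpmin.union_or_diff_or_inter hx hCs with hunion | hdiff | hinter
  · exact (hfewer (p.1 ∪ x.1, p.2 ∩ x.2) hunion
      (Set.union_subset (Set.subset_biUnion_of_mem hp.1) hxU)
      (hcf.crossing_union_subset hp.1 x.1)).elim
  · exact (hfewer (x.1 ∩ p.2, x.2 ∪ p.1) hdiff (Set.inter_subset_left.trans hxU)
      (hcf.crossing_inter_subset hp.1 (isCut_iff.mp (hpmin.1.isCut hCs)) x.1)).elim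
  · exact ⟨T, hT, hcf, rfl, fun m hm => ⟨m, hm, subset_rfl⟩, p, hp.1,
      .inr ⟨_, _, hinter, Set.inter_subset_left⟩⟩

end Serving

theorem IsMinSep.of_cutOrder_eq_zero {V E : Type} {G : Multigraph V E} {ℰ : GTangle G}
    {A B : Set V} (h : G.cutOrder A B = 0) : IsMinSep (∅ : Set (GTangle G)) ℰ A B :=
  ⟨fun _ h' => h'.elim, fun _ _ _ => h ▸ Nat.zero_le _⟩

/-- Without tangles to separate from, every pair of order zero is a minimum separator, so the
single pair `(⋃ 𝓢, ∅)` will do. -/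
theorem exists_crossFree_isSegregator_empty {V E : Type} {G : Multigraph V E}
    {Cs' : Set (GTangle G)} {𝓢 : Set (Set V × Set V)} (h : IsSegregator ∅ Cs' 𝓢) :
    ∃ 𝓢' : Set (Set V × Set V), IsSegregator ∅ Cs' 𝓢' ∧ CrossFree 𝓢' ∧
      (⋃ p ∈ 𝓢, p.1) = ⋃ p ∈ 𝓢', p.1 := by
  rcases 𝓢.eq_empty_or_nonempty with rfl | ⟨p₀, hp₀⟩
  · exact ⟨∅, h, fun _ hp => hp.elim, rfl⟩
  have hzero : ∀ ℰ : GTangle G, IsMinSep ∅ ℰ (⋃ p ∈ 𝓢, p.1) ∅ := fun _ =>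
    .of_cutOrder_eq_zero (by simp [cutOrder, crosses, incident])
  obtain ⟨ℰ₀, hℰ₀, -⟩ := h.1 p₀ hp₀
  refine ⟨{(⋃ p ∈ 𝓢, p.1, ∅)}, ⟨?_, fun ℰ _ => ⟨_, rfl, .inl (hzero ℰ)⟩⟩, ?_,
    by rw [Set.biUnion_singleton]⟩
  · rintro _ rfl
    exact ⟨ℰ₀, hℰ₀, hzero ℰ₀⟩
  · rintro _ rfl _ rfl hne
    exact (hne rfl).elim

/-- Let `G` be a graph, `Cs` and `Cs'` collections of edge-tangles
in `G`, and `𝓢` a `(Cs,Cs')`-segregator. Then there exists a `(Cs,Cs')`-segregator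
`𝓢*` that is a cross-free family and satisfies
`⋃_{[A,B]∈𝓢} A = ⋃_{[A,B]∈𝓢*} A`. -/
theorem uncross_segregator {V E : Type} [Fintype V] [Fintype E]
    (G : Multigraph V E) (Cs Cs' : Set (GTangle G))
    (𝓢 : Set (Set V × Set V)) (h : IsSegregator Cs Cs' 𝓢) :
    ∃ 𝓢' : Set (Set V × Set V), IsSegregator Cs Cs' 𝓢' ∧ CrossFree 𝓢' ∧
      (⋃ p ∈ 𝓢, p.1) = ⋃ p ∈ 𝓢', p.1 := by
  rcases Cs.eq_empty_or_nonempty with rfl | hCs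
  · exact exists_crossFree_isSegregator_empty h
  obtain ⟨h𝓢, hserves⟩ := isSegregator_iff.mp h
  obtain ⟨T₀, hT₀⟩ := h𝓢.exists_crossFree hCs
  obtain ⟨T, ⟨hT, hcf, hU⟩, hmax⟩ :=
    Set.Finite.exists_maximalFor (fun T => {ℰ | Serves Cs T ℰ})
    {T | IsMinSepFamily Cs Cs' T ∧ CrossFree T ∧ ⋃ m ∈ T, m.1 = ⋃ p ∈ 𝓢, p.1}
    (Set.toFinite _) ⟨T₀, hT₀⟩
  refine ⟨T, isSegregator_iff.mpr ⟨hT, fun ℰ hℰ => ?_⟩, hcf, hU.symm⟩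
  obtain ⟨A₀, B₀, hmin, hA₀⟩ := (hserves ℰ hℰ).exists_subset_biUnion
  obtain ⟨T', hT', hcf', hU', hTT', hT'ℰ⟩ := hcf.exists_serves hT hCs hℰ hmin (hU ▸ hA₀)
  exact hmax ⟨hT', hcf', hU'.trans hU⟩ (fun _ => Serves.mono hTT') hT'ℰ
end

section
/- If G is a loopless graph with carving-width at most w, then the tree-cut torso-width of G is at most 3w/2. -/
/-- A tree-cut decomposition of `G`: a (finite) tree `T` together with pairwise
disjoint bags partitioning `V(G)`. -/
structure TreeCutDecomp {V E : Type} (G : Multigraph V E) (T : Type) where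
  tree : SimpleGraph T
  isTree : tree.IsTree
  finite : Finite T
  bag : T → Set V
  disjoint_bags : ∀ s t : T, s ≠ t → Disjoint (bag s) (bag t)
  cover : ∀ v : V, ∃ t : T, v ∈ bag t

namespace TreeCutDecomp

variable {V E T : Type} {G : Multigraph V E}

/-- The set of nodes of the component of `T - t₁t₂` containing `t₁`. -/
def side (D : TreeCutDecomp G T) (t₁ t₂ : T) : Set T :=
  {s | Relation.ReflTransGen
    (fun x y => D.tree.Adj x y ∧ ¬(x = t₁ ∧ y = t₂) ∧ ¬(x = t₂ ∧ y = t₁)) t₁ s}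

/-- The union of the bags over the component of `T - t₁t₂` containing `t₁`. -/
def sideBags (D : TreeCutDecomp G T) (t₁ t₂ : T) : Set V :=
  ⋃ s ∈ D.side t₁ t₂, D.bag s

/-- The adhesion set of the tree edge `t₁t₂`: the edges of `G` with one end in
the bags on the `t₁` side and one end in the bags on the `t₂` side. -/
def adhEdges (D : TreeCutDecomp G T) (t₁ t₂ : T) : Set E :=
  {e | G.crosses (D.sideBags t₁ t₂) (D.sideBags t₂ t₁) e}

/-- `x` and `y` are joined by a path of `T` avoiding the node set `C`. -/
def compRel (D : TreeCutDecomp G T) (C : Set T) (x y : T) : Prop :=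
  Relation.ReflTransGen (fun a b => D.tree.Adj a b ∧ a ∉ C ∧ b ∉ C) x y

/-- The union of the bags over the component of `T - C` containing `s`. -/
def compBags (D : TreeCutDecomp G T) (C : Set T) (s : T) : Set V :=
  ⋃ s' ∈ {s' | D.compRel C s s'}, D.bag s'

/-- The edges of the torso at `C`, viewed as edges of `G`: those edges having
no component of `T - C` whose bags contain all their ends. -/
def torsoEdges (D : TreeCutDecomp G T) (C : Set T) : Set E :=
  {e | ¬ ∃ s : T, s ∉ C ∧ ∀ x ∈ G.ends e, x ∈ D.compBags C s}

/-- `x` and `y` are joined in the forest obtained from `T` by deleting all edges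
whose adhesion set has fewer than `θ` elements. -/
def cellRel (D : TreeCutDecomp G T) (θ : ℕ) (x y : T) : Prop :=
  Relation.ReflTransGen (fun a b => D.tree.Adj a b ∧ θ ≤ (D.adhEdges a b).ncard) x y

/-- A pseudo-`θ`-cell: a component of the forest obtained from `T` by deleting
all edges whose adhesion set has size less than `θ`. -/
def IsPseudoCell (D : TreeCutDecomp G T) (θ : ℕ) (C : Set T) : Prop :=
  ∃ t : T, C = {s | D.cellRel θ t s}

/-- A `θ`-cell: a pseudo-`θ`-cell whose torso has at least `θ` edges. -/
def IsCell (D : TreeCutDecomp G T) (θ : ℕ) (C : Set T) : Prop :=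
  D.IsPseudoCell θ C ∧ θ ≤ (D.torsoEdges C).ncard

/-- `(T,𝒳)` is `θ`-smooth. -/
def Smooth (D : TreeCutDecomp G T) (θ : ℕ) : Prop :=
  ∀ C : Set T, (D.IsCell θ C ∨ ∃ t : T, C = {t}) →
    ∀ Y Z : Set E, Y ⊆ D.torsoEdges C → Z ⊆ D.torsoEdges C →
      Y.ncard = Z.ncard → Y.ncard ≤ θ →
      ¬ ∃ A B : Set V, G.IsCut A B ∧ G.cutOrder A B < Y.ncard ∧
        (∀ e ∈ Y, G.incident A e) ∧ (∀ e ∈ Z, G.incident B e)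

end TreeCutDecomp

/-- A carving: a tree-cut decomposition in which every leaf bag is a singleton,
every non-leaf bag is empty, and every node of the tree has degree 1 or 3. -/
def TreeCutDecomp.IsCarving {V E T : Type} {G : Multigraph V E}
    (D : TreeCutDecomp G T) : Prop :=
  ∀ t : T,
    ((D.tree.neighborSet t).ncard = 1 → ∃ v : V, D.bag t = {v}) ∧
    ((D.tree.neighborSet t).ncard ≠ 1 → D.bag t = ∅) ∧
    ((D.tree.neighborSet t).ncard = 1 ∨ (D.tree.neighborSet t).ncard = 3)

/-! The carving itself is the required decomposition. At a leaf `t` with bag `{v}`, every torso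
edge joins `v` to a vertex outside the bag (`G` is loopless), so it lies in the adhesion set of
the unique tree edge at `t`, and the torso has at most `w` edges. At a node `t` of degree 3 the bag
is empty, so every torso edge joins two different components of `T - t` and hence lies in the
adhesion sets of two of the three tree edges at `t`; double counting gives `2 |torso| ≤ 3w`. -/

open Finset

lemma mul_ncard_le_sum_ncard {α ι : Type*} [Finite α] {X : Set α} {A : ι → Set α}
    [∀ i, DecidablePred (· ∈ A i)] {N : Finset ι} {k : ℕ} (h : ∀ x ∈ X, k ≤ #{i ∈ N | x ∈ A i}) :
    k * X.ncard ≤ ∑ i ∈ N, (A i).ncard := by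
  classical
  have := Fintype.ofFinite α
  calc k * X.ncard = ∑ _x ∈ X.toFinset, k := by
        rw [sum_const, smul_eq_mul, Set.ncard_eq_toFinset_card', mul_comm]
    _ ≤ ∑ x ∈ X.toFinset, #{i ∈ N | x ∈ A i} :=
        sum_le_sum fun x hx => h x (Set.mem_toFinset.mp hx)
    _ = ∑ i ∈ N, #{x ∈ X.toFinset | x ∈ A i} := by
        simp_rw [card_eq_sum_ones, sum_filter]
        exact sum_comm
    _ ≤ ∑ i ∈ N, (A i).ncard := sum_le_sum fun i _ => by
        rw [← Set.ncard_coe_finset]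
        exact Set.ncard_le_ncard fun x hx => (mem_filter.mp hx).2

namespace TreeCutDecomp

variable {V E T : Type} {G : Multigraph V E} (D : TreeCutDecomp G T) {s t u : T}

lemma exists_adj_compRel (hu : u ≠ t) : ∃ s, D.tree.Adj t s ∧ D.compRel {t} s u := by
  have hreach : Relation.ReflTransGen D.tree.Adj t u :=
    (SimpleGraph.reachable_iff_reflTransGen t u).mp (D.isTree.connected.preconnected t u)
  induction hreach with
  | refl => exact absurd rfl hu
  | @tail b c _ hbc ih =>
    by_cases hb : b = t
    · subst hb
      exact ⟨c, hbc, .refl⟩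
    · obtain ⟨s, hts, hsb⟩ := ih hb
      exact ⟨s, hts, hsb.tail ⟨hbc, hb, hu⟩⟩

lemma mem_side_of_compRel {a b : T} (ht : t = a ∨ t = b) (hs : s ∈ D.side a b)
    (h : D.compRel {t} s u) : u ∈ D.side a b :=
  hs.trans <| Relation.ReflTransGen.mono (fun x y ⟨hxy, hx, hy⟩ => by
    simp only [Set.mem_singleton_iff] at hx hy
    rcases ht with rfl | rfl <;> exact ⟨hxy, by tauto, by tauto⟩) _ _ h

lemma mem_side_of_not_compRel (h : ¬ D.compRel {t} s u) : u ∈ D.side t s := by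
  by_cases hu : u = t
  · subst hu
    exact .refl
  obtain ⟨s', hts', hs'u⟩ := D.exists_adj_compRel hu
  have hs' : s' ≠ s := by
    rintro rfl
    exact h hs'u
  exact D.mem_side_of_compRel (Or.inl rfl)
    (.single ⟨hts', fun h => hs' h.2, fun h => hts'.ne h.2.symm⟩) hs'u

lemma compBags_subset_sideBags : D.compBags {t} s ⊆ D.sideBags s t :=
  Set.biUnion_subset_biUnion_left fun _ => D.mem_side_of_compRel (Or.inr rfl) .refl

lemma mem_sideBags_of_notMem_compBags {v : V} (hv : v ∉ D.compBags {t} s) :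
    v ∈ D.sideBags t s := by
  obtain ⟨u, hu⟩ := D.cover v
  exact Set.mem_biUnion (D.mem_side_of_not_compRel fun h => hv (Set.mem_biUnion h hu)) hu

lemma exists_adj_mem_compBags {v : V} (hv : v ∉ D.bag t) :
    ∃ s, D.tree.Adj t s ∧ v ∈ D.compBags {t} s := by
  obtain ⟨u, hu⟩ := D.cover v
  have hut : u ≠ t := by
    rintro rfl
    exact hv hu
  obtain ⟨s, hts, hsu⟩ := D.exists_adj_compRel hut
  exact ⟨s, hts, Set.mem_biUnion hsu hu⟩

lemma mem_adhEdges_of_mem_torsoEdges (hts : D.tree.Adj t s) {e : E}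
    (he : e ∈ D.torsoEdges {t}) (hinc : G.incident (D.compBags {t} s) e) :
    e ∈ D.adhEdges s t := by
  obtain ⟨x, hx, hxs⟩ := hinc
  obtain ⟨y, hy, hys⟩ : ∃ y ∈ G.ends e, y ∉ D.compBags {t} s := by
    by_contra! h
    exact he ⟨s, hts.ne', h⟩
  exact ⟨⟨x, hx, D.compBags_subset_sideBags hxs⟩,
    ⟨y, hy, D.mem_sideBags_of_notMem_compBags hys⟩⟩

variable [Fintype (D.tree.neighborSet t)] [Finite E]

lemma ncard_torsoEdges_le_sum_ncard_adhEdges (hloopless : ∀ e : E, ¬ (G.ends e).IsDiag)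
    (hbag : (D.bag t).Subsingleton) :
    (D.torsoEdges {t}).ncard ≤ ∑ s ∈ D.tree.neighborFinset t, (D.adhEdges s t).ncard := by
  classical
  rw [← one_mul (D.torsoEdges {t}).ncard]
  refine mul_ncard_le_sum_ncard fun e he => ?_
  obtain ⟨x, hx, hxt⟩ : ∃ x ∈ G.ends e, x ∉ D.bag t := by
    have hx₀ := Sym2.out_fst_mem (G.ends e)
    by_contra! h
    exact Sym2.other_ne (hloopless e) hx₀ (hbag (h _ (Sym2.other_mem hx₀)) (h _ hx₀))
  obtain ⟨s, hts, hxs⟩ := D.exists_adj_mem_compBags hxt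
  exact one_le_card.mpr ⟨s, mem_filter.mpr ⟨(D.tree.mem_neighborFinset t s).mpr hts,
    D.mem_adhEdges_of_mem_torsoEdges hts he ⟨x, hx, hxs⟩⟩⟩

lemma two_mul_ncard_torsoEdges_le_sum_ncard_adhEdges (hbag : D.bag t = ∅) :
    2 * (D.torsoEdges {t}).ncard ≤ ∑ s ∈ D.tree.neighborFinset t, (D.adhEdges s t).ncard := by
  classical
  refine mul_ncard_le_sum_ncard fun e he => ?_
  have hmem {s : T} (hts : D.tree.Adj t s) {x : V} (hx : x ∈ G.ends e)
      (hxs : x ∈ D.compBags {t} s) : s ∈ {s ∈ D.tree.neighborFinset t | e ∈ D.adhEdges s t} :=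
    mem_filter.mpr ⟨(D.tree.mem_neighborFinset t s).mpr hts,
      D.mem_adhEdges_of_mem_torsoEdges hts he ⟨x, hx, hxs⟩⟩
  obtain ⟨x, y, hxy⟩ : ∃ x y, G.ends e = s(x, y) :=
    ⟨_, _, (Sym2.other_spec (Sym2.out_fst_mem _)).symm⟩
  obtain ⟨a, hta, hxa⟩ := D.exists_adj_mem_compBags (hbag ▸ Set.notMem_empty x)
  obtain ⟨b, htb, hyb⟩ := D.exists_adj_mem_compBags (hbag ▸ Set.notMem_empty y)
  have hab : a ≠ b := by
    rintro rfl
    refine he ⟨a, hta.ne', fun z hz => ?_⟩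
    rcases Sym2.mem_iff.mp (hxy ▸ hz) with rfl | rfl <;> assumption
  exact one_lt_card.mpr ⟨a, hmem hta (hxy ▸ Sym2.mem_mk_left x y) hxa,
    b, hmem htb (hxy ▸ Sym2.mem_mk_right x y) hyb, hab⟩

end TreeCutDecomp

theorem carvingWidth_le_imp_torsoWidth_le_general {V E : Type} [Fintype E]
    (G : Multigraph V E) (hloopless : ∀ e : E, ¬ (G.ends e).IsDiag) (w : ℕ)
    (h : ∃ (T : Type) (D : TreeCutDecomp G T), D.IsCarving ∧
      ∀ a b : T, D.tree.Adj a b → (D.adhEdges a b).ncard ≤ w) :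
    ∃ (T : Type) (D : TreeCutDecomp G T),
      ∀ t : T, 2 * (D.torsoEdges {t}).ncard ≤ 3 * w := by
  classical
  obtain ⟨T, D, hcarving, hw⟩ := h
  have := D.finite
  have := Fintype.ofFinite T
  refine ⟨T, D, fun t => ?_⟩
  have hsum : ∑ s ∈ D.tree.neighborFinset t, (D.adhEdges s t).ncard
      ≤ (D.tree.neighborSet t).ncard * w := by
    rw [Set.ncard_eq_toFinset_card', ← smul_eq_mul]
    exact sum_le_card_nsmul _ _ _ fun s hs => hw s t ((D.tree.mem_neighborFinset t s).mp hs).symm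
  obtain ⟨hleaf, hinner, hdeg⟩ := hcarving t
  rcases hdeg with hdeg | hdeg
  · rw [hdeg] at hsum
    obtain ⟨v, hv⟩ := hleaf hdeg
    have := D.ncard_torsoEdges_le_sum_ncard_adhEdges hloopless (hv ▸ Set.subsingleton_singleton)
    omega
  · rw [hdeg] at hsum
    have := D.two_mul_ncard_torsoEdges_le_sum_ncard_adhEdges (hinner (by omega))
    omega

/-- If `G` is a loopless graph with carving-width at most `w`,
then the tree-cut torso-width of `G` is at most `3w/2` (i.e. twice the
torso-width of some tree-cut decomposition is at most `3w`). -/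
theorem carvingWidth_le_imp_torsoWidth_le {V E : Type} [Fintype V] [Fintype E]
    (G : Multigraph V E) (hloopless : ∀ e : E, ¬ (G.ends e).IsDiag) (w : ℕ)
    (h : ∃ (T : Type) (D : TreeCutDecomp G T), D.IsCarving ∧
      ∀ a b : T, D.tree.Adj a b → (D.adhEdges a b).ncard ≤ w) :
    ∃ (T : Type) (D : TreeCutDecomp G T),
      ∀ t : T, 2 * (D.torsoEdges {t}).ncard ≤ 3 * w :=
  carvingWidth_le_imp_torsoWidth_le_general G hloopless w h
end

section
/- Let G be a graph and w a positive integer. If the tree-cut torso-width of G is at most w, then there exists no edge-tangle of order at least w+1 in G. -/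
/-- An edge-tangle of order `θ` in `G`: a set of edge-cuts of order less than
`θ` satisfying axioms (E1)-(E3). -/
structure EdgeTangle {V E : Type} (G : Multigraph V E) (θ : ℕ) where
  mem : Set V → Set V → Prop
  isCut_of_mem : ∀ A B, mem A B → G.IsCut A B
  order_lt_of_mem : ∀ A B, mem A B → G.cutOrder A B < θ
  e1 : ∀ A B, G.IsCut A B → G.cutOrder A B < θ → mem A B ∨ mem B A
  e2 : ∀ A₁ B₁ A₂ B₂ A₃ B₃, mem A₁ B₁ → mem A₂ B₂ → mem A₃ B₃ →
    (B₁ ∩ B₂ ∩ B₃).Nonempty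
  e3 : ∀ A B, mem A B → θ ≤ {e | G.incident B e}.ncard

/-!
Orient each edge `ab` of the decomposition tree towards the side that the tangle calls big.
Every union of branches at a node `t₀` is a cut crossed only by torso edges at `t₀`, so it has
order at most `w < θ`; in particular the orientation is total, and an orientation of a finite
tree has a sink `t₀`. All branches at the sink are small sides, and by (E2) a union of small
sides is small once its order is below `θ`; hence `((bag t₀)ᶜ, bag t₀)` lies in the tangle.
Then (E3) gives at least `θ` edges meeting `bag t₀`, but these are torso edges at `t₀`, of which
there are at most `w`.
-/

open SimpleGraph

namespace SimpleGraph

variable {T : Type*} {G : SimpleGraph T} {a b s t : T}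

lemma reachable_deleteEdges_or_of_reachable (h : G.Reachable a s) :
    (G.deleteEdges {s(a, b)}).Reachable a s ∨ (G.deleteEdges {s(a, b)}).Reachable b s := by
  rw [reachable_iff_reflTransGen] at h
  induction h with
  | refl => exact .inl .rfl
  | @tail x y _ hxy ih =>
    by_cases he : s(x, y) = s(a, b)
    · rcases Sym2.eq_iff.mp he with ⟨-, rfl⟩ | ⟨-, rfl⟩
      · exact .inr .rfl
      · exact .inl .rfl
    · have hstep : (G.deleteEdges {s(a, b)}).Reachable x y := Adj.reachable (by simp [hxy, he])
      exact ih.imp (·.trans hstep) (·.trans hstep)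

lemma exists_adj_reachable_deleteEdges (h : G.Reachable a s) (hs : s ≠ a) :
    ∃ t, G.Adj t a ∧ (G.deleteEdges {s(t, a)}).Reachable t s := by
  suffices s = a ∨ ∃ t, G.Adj t a ∧ (G.deleteEdges {s(t, a)}).Reachable t s from
    this.resolve_left hs
  clear hs
  rw [reachable_iff_reflTransGen] at h
  induction h with
  | refl => exact .inl rfl
  | @tail x y _ hxy ih =>
    by_cases hya : y = a
    · exact .inl hya
    rcases ih with rfl | ⟨t, hta, hx⟩
    · exact .inr ⟨y, hxy.symm, .rfl⟩
    refine .inr ⟨t, hta, ?_⟩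
    by_cases he : s(x, y) = s(t, a)
    · rcases Sym2.eq_iff.mp he with ⟨-, h⟩ | ⟨-, rfl⟩
      · exact absurd h hya
      · exact .rfl
    · exact hx.trans (Adj.reachable (by simp [hxy, he]))

lemma IsAcyclic.not_reachable_deleteEdges (hG : G.IsAcyclic) (hab : G.Adj a b) :
    ¬(G.deleteEdges {s(a, b)}).Reachable a b :=
  isBridge_iff.mp (isAcyclic_iff_forall_adj_isBridge.mp hG hab)

lemma IsAcyclic.reachable_deleteEdges_of_adj (hG : G.IsAcyclic) (hab : G.Adj a b)
    (hbt : G.Adj b t) (hat : a ≠ t) (hs : (G.deleteEdges {s(a, b)}).Reachable a s) :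
    (G.deleteEdges {s(b, t)}).Reachable b s := by
  rw [reachable_iff_reflTransGen] at hs
  induction hs with
  | refl => exact Adj.reachable (by simp [hab.symm, hat, hab.ne])
  | @tail x y hax hxy ih =>
    refine ih.trans (Adj.reachable ?_)
    simp only [deleteEdges_adj, Set.mem_singleton_iff] at hxy ⊢
    refine ⟨hxy.1, fun he => hG.not_reachable_deleteEdges hab ?_⟩
    rcases Sym2.eq_iff.mp he with ⟨rfl, -⟩ | ⟨-, rfl⟩
    · exact (reachable_iff_reflTransGen _ _).mpr hax
    · exact (reachable_iff_reflTransGen _ _).mpr (hax.tail (by simpa using hxy))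

theorem IsAcyclic.exists_sink [Finite T] [Nonempty T] (hG : G.IsAcyclic) (R : T → T → Prop)
    (hR : ∀ a b, G.Adj a b → R a b ∨ R b a) : ∃ t₀, ∀ t, G.Adj t t₀ → R t t₀ := by
  by_cases hedge : ∃ a b, G.Adj a b ∧ R a b
  -- the head of an oriented edge `ab` maximising the side of `a` is a sink
  · let side (p : T × T) : Set T := {s | (G.deleteEdges {s(p.1, p.2)}).Reachable p.1 s}
    obtain ⟨⟨a, b⟩, ⟨hab, hRab⟩, hmax⟩ :=
      Set.exists_max_image {p : T × T | G.Adj p.1 p.2 ∧ R p.1 p.2} (fun p => (side p).ncard)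
        (Set.toFinite _) (by obtain ⟨a, b, h⟩ := hedge; exact ⟨(a, b), h⟩)
    refine ⟨b, fun t htb => by_contra fun hRtb => ?_⟩
    have hat : a ≠ t := by rintro rfl; exact hRtb hRab
    have hsub : side (a, b) ⊂ side (b, t) :=
      ⟨fun s => hG.reachable_deleteEdges_of_adj hab htb.symm hat,
        fun h => hG.not_reachable_deleteEdges hab (h .rfl)⟩
    exact (Set.ncard_lt_ncard hsub (Set.toFinite _)).not_ge
      (hmax (b, t) ⟨htb.symm, (hR t b htb).resolve_left hRtb⟩)
  · push Not at hedge
    obtain ⟨t₀⟩ := ‹Nonempty T›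
    exact ⟨t₀, fun t h => (hR t t₀ h).resolve_right (hedge t₀ t h.symm)⟩

end SimpleGraph

namespace Multigraph

variable {V E : Type} (G : Multigraph V E)

lemma isCut_compl (A : Set V) : G.IsCut A Aᶜ :=
  ⟨disjoint_compl_right, Set.union_compl_self A⟩

lemma cutOrder_empty_univ : G.cutOrder ∅ Set.univ = 0 := by
  simp [cutOrder, crosses, incident]

end Multigraph

namespace EdgeTangle

variable {V E : Type} {G : Multigraph V E} {θ : ℕ} (𝒯 : EdgeTangle G θ) {A A₁ A₂ B₁ B₂ : Set V}

lemma not_disjoint (h₁ : 𝒯.mem A₁ B₁) (h₂ : 𝒯.mem A₂ B₂) : ¬Disjoint B₁ B₂ := fun h => by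
  obtain ⟨x, ⟨hx₁, hx₂⟩, -⟩ := 𝒯.e2 _ _ _ _ _ _ h₁ h₂ h₁
  exact Set.disjoint_left.mp h hx₁ hx₂

lemma mem_or_mem_compl (hA : G.cutOrder A Aᶜ < θ) : 𝒯.mem A Aᶜ ∨ 𝒯.mem Aᶜ A :=
  𝒯.e1 A Aᶜ (G.isCut_compl A) hA

lemma mem_empty (hθ : 0 < θ) : 𝒯.mem ∅ Set.univ := by
  have h := 𝒯.mem_or_mem_compl (A := ∅) (by simpa [G.cutOrder_empty_univ] using hθ)
  rw [Set.compl_empty] at h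
  exact h.resolve_right fun h' => 𝒯.not_disjoint h' h' (Set.empty_disjoint _)

lemma nonempty (𝒯 : EdgeTangle G θ) (hθ : 0 < θ) : Nonempty V := by
  obtain ⟨x, -⟩ := 𝒯.e2 _ _ _ _ _ _ (𝒯.mem_empty hθ) (𝒯.mem_empty hθ) (𝒯.mem_empty hθ)
  exact ⟨x⟩

lemma mem_union (h₁ : 𝒯.mem A₁ A₁ᶜ) (h₂ : 𝒯.mem A₂ A₂ᶜ)
    (h : G.cutOrder (A₁ ∪ A₂) (A₁ ∪ A₂)ᶜ < θ) : 𝒯.mem (A₁ ∪ A₂) (A₁ ∪ A₂)ᶜ := by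
  refine (𝒯.mem_or_mem_compl h).resolve_right fun h₃ => ?_
  obtain ⟨x, ⟨hx₁, hx₂⟩, hx₃⟩ := 𝒯.e2 _ _ _ _ _ _ h₁ h₂ h₃
  exact hx₃.elim hx₁ hx₂

lemma mem_biUnion {ι : Type*} {S : Set ι} (hS : S.Finite) (A : ι → Set V)
    (hA : ∀ i ∈ S, 𝒯.mem (A i) (A i)ᶜ)
    (hcut : ∀ S' : Set ι, G.cutOrder (⋃ i ∈ S', A i) (⋃ i ∈ S', A i)ᶜ < θ) :
    𝒯.mem (⋃ i ∈ S, A i) (⋃ i ∈ S, A i)ᶜ := by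
  induction S, hS using Set.Finite.induction_on with
  | empty => simpa using 𝒯.mem_empty (by simpa [G.cutOrder_empty_univ] using hcut ∅)
  | @insert i S _ _ ih =>
    rw [Set.biUnion_insert]
    exact 𝒯.mem_union (hA i (Set.mem_insert i S))
      (ih fun j hj => hA j (Set.mem_insert_of_mem i hj)) (by simpa using hcut (insert i S))

end EdgeTangle

namespace TreeCutDecomp

variable {V E T : Type} {G : Multigraph V E} (D : TreeCutDecomp G T)

lemma mem_side_iff {t₁ t₂ s : T} :
    s ∈ D.side t₁ t₂ ↔ (D.tree.deleteEdges {s(t₁, t₂)}).Reachable t₁ s := by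
  rw [reachable_iff_reflTransGen]
  have hadj : (D.tree.deleteEdges {s(t₁, t₂)}).Adj =
      fun x y => D.tree.Adj x y ∧ ¬(x = t₁ ∧ y = t₂) ∧ ¬(x = t₂ ∧ y = t₁) := by
    ext x y
    simp [not_or]
  rw [hadj]
  rfl

lemma eq_of_mem_bag {x : V} {s₁ s₂ : T} (h₁ : x ∈ D.bag s₁) (h₂ : x ∈ D.bag s₂) : s₁ = s₂ :=
  by_contra fun hne => Set.disjoint_left.mp (D.disjoint_bags s₁ s₂ hne) h₁ h₂

lemma mem_sideBags_iff {x : V} {s t₁ t₂ : T} (hx : x ∈ D.bag s) :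
    x ∈ D.sideBags t₁ t₂ ↔ s ∈ D.side t₁ t₂ := by
  simp only [sideBags, Set.mem_iUnion₂]
  exact ⟨fun ⟨s', hs', hx'⟩ => D.eq_of_mem_bag hx' hx ▸ hs', fun hs => ⟨s, hs, hx⟩⟩

lemma compl_sideBags {t₁ t₂ : T} (hadj : D.tree.Adj t₁ t₂) :
    (D.sideBags t₁ t₂)ᶜ = D.sideBags t₂ t₁ := by
  ext x
  obtain ⟨s, hs⟩ := D.cover x
  rw [Set.mem_compl_iff, D.mem_sideBags_iff hs, D.mem_sideBags_iff hs, mem_side_iff,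
    mem_side_iff, Sym2.eq_swap (a := t₂)]
  constructor
  · exact (reachable_deleteEdges_or_of_reachable
      (D.isTree.connected.preconnected t₁ s)).resolve_left
  · exact fun h₂ h₁ => D.isTree.isAcyclic.not_reachable_deleteEdges hadj (h₁.trans h₂.symm)

lemma biUnion_sideBags_adj (t₀ : T) :
    ⋃ t ∈ {t | D.tree.Adj t t₀}, D.sideBags t t₀ = (D.bag t₀)ᶜ := by
  ext x
  obtain ⟨s, hs⟩ := D.cover x
  have hx : x ∉ D.bag t₀ ↔ s ≠ t₀ :=
    ⟨fun hx h => hx (h ▸ hs), fun h hx => h (D.eq_of_mem_bag hs hx)⟩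
  simp only [Set.mem_iUnion₂, Set.mem_ofPred_eq, D.mem_sideBags_iff hs, mem_side_iff,
    Set.mem_compl_iff, hx, exists_prop]
  constructor
  · rintro ⟨t, hadj, hreach⟩ rfl
    exact D.isTree.isAcyclic.not_reachable_deleteEdges hadj hreach
  · exact exists_adj_reachable_deleteEdges (D.isTree.connected.preconnected t₀ s)

lemma not_mem_of_compRel {C : Set T} {a b : T} (h : D.compRel C a b) (ha : a ∉ C) : b ∉ C := by
  induction h with
  | refl => exact ha
  | tail _ step _ => exact step.2.2

lemma reachable_of_compRel {t t₀ a b : T} (h : D.compRel {t₀} a b) :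
    (D.tree.deleteEdges {s(t, t₀)}).Reachable a b := by
  rw [reachable_iff_reflTransGen]
  refine Relation.ReflTransGen.mono (fun x y hxy => ?_) _ _ h
  simp only [deleteEdges_adj, Set.mem_singleton_iff, Sym2.eq_iff]
  grind

lemma crosses_subset_torsoEdges (S : Set T) (t₀ : T) :
    {e | G.crosses (⋃ t ∈ S, D.sideBags t t₀) (⋃ t ∈ S, D.sideBags t t₀)ᶜ e} ⊆
      D.torsoEdges {t₀} := by
  rintro e ⟨⟨x, hxe, hxU⟩, ⟨y, hye, hyU⟩⟩ ⟨s, -, hall⟩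
  obtain ⟨t, ht, hxt⟩ := Set.mem_iUnion₂.mp hxU
  simp only [compBags, Set.mem_iUnion₂, Set.mem_ofPred_eq] at hall
  obtain ⟨sx, hsx, hx⟩ := hall x hxe
  obtain ⟨sy, hsy, hy⟩ := hall y hye
  rw [D.mem_sideBags_iff hx, mem_side_iff] at hxt
  have hyt : y ∈ D.sideBags t t₀ := by
    rw [D.mem_sideBags_iff hy, mem_side_iff]
    exact hxt.trans ((D.reachable_of_compRel hsx).symm.trans (D.reachable_of_compRel hsy))
  exact hyU (Set.mem_iUnion₂.mpr ⟨t, ht, hyt⟩)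

lemma incident_bag_subset_torsoEdges (t₀ : T) :
    {e | G.incident (D.bag t₀) e} ⊆ D.torsoEdges {t₀} := by
  rintro e ⟨x, hxe, hx⟩ ⟨s, hs, hall⟩
  simp only [compBags, Set.mem_iUnion₂, Set.mem_ofPred_eq] at hall
  obtain ⟨s', hss', hx'⟩ := hall x hxe
  exact D.not_mem_of_compRel hss' hs (D.eq_of_mem_bag hx' hx)

lemma cutOrder_biUnion_sideBags_le [Finite E] (S : Set T) (t₀ : T) :
    G.cutOrder (⋃ t ∈ S, D.sideBags t t₀) (⋃ t ∈ S, D.sideBags t t₀)ᶜ ≤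
      (D.torsoEdges {t₀}).ncard :=
  Set.ncard_le_ncard (D.crosses_subset_torsoEdges S t₀)

end TreeCutDecomp

namespace TreeCutDecomp

variable {V E T : Type} [Finite E] {G : Multigraph V E} (D : TreeCutDecomp G T) {θ : ℕ}
  (𝒯 : EdgeTangle G θ)

lemma exists_sink_of_edgeTangle [Nonempty T] (hwidth : ∀ t, (D.torsoEdges {t}).ncard < θ) :
    ∃ t₀, ∀ t, D.tree.Adj t t₀ → 𝒯.mem (D.sideBags t t₀) (D.sideBags t t₀)ᶜ := by
  have := D.finite
  refine D.isTree.isAcyclic.exists_sink _ fun a b hab => ?_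
  have hcut := (D.cutOrder_biUnion_sideBags_le {a} b).trans_lt (hwidth b)
  simp only [Set.mem_singleton_iff, Set.iUnion_iUnion_eq_left] at hcut
  simpa [D.compl_sideBags hab, D.compl_sideBags hab.symm] using 𝒯.mem_or_mem_compl hcut

lemma mem_compl_bag_of_sink (hwidth : ∀ t, (D.torsoEdges {t}).ncard < θ) {t₀ : T}
    (ht₀ : ∀ t, D.tree.Adj t t₀ → 𝒯.mem (D.sideBags t t₀) (D.sideBags t t₀)ᶜ) :
    𝒯.mem (D.bag t₀)ᶜ (D.bag t₀) := by
  have := D.finite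
  have h := 𝒯.mem_biUnion (Set.toFinite {t | D.tree.Adj t t₀}) (D.sideBags · t₀) ht₀
    fun S => (D.cutOrder_biUnion_sideBags_le S t₀).trans_lt (hwidth t₀)
  rwa [D.biUnion_sideBags_adj, compl_compl] at h

end TreeCutDecomp

theorem no_edgeTangle_of_torsoWidth_le_general {V E : Type} [Fintype E]
    (G : Multigraph V E) (w : ℕ)
    (h : ∃ (T : Type) (D : TreeCutDecomp G T),
      ∀ t : T, (D.torsoEdges {t}).ncard ≤ w) :
    ∀ θ : ℕ, w + 1 ≤ θ → IsEmpty (EdgeTangle G θ) := by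
  intro θ hθ
  obtain ⟨T, D, hD⟩ := h
  refine ⟨fun 𝒯 => ?_⟩
  have hwidth : ∀ t, (D.torsoEdges {t}).ncard < θ := fun t => (hD t).trans_lt hθ
  obtain ⟨v⟩ := 𝒯.nonempty (by omega)
  have : Nonempty T := ⟨(D.cover v).choose⟩
  obtain ⟨t₀, ht₀⟩ := D.exists_sink_of_edgeTangle 𝒯 hwidth
  have hbag_large := 𝒯.e3 _ _ (D.mem_compl_bag_of_sink 𝒯 hwidth ht₀)
  have hbag_small := Set.ncard_le_ncard (D.incident_bag_subset_torsoEdges t₀)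
  exact absurd (hbag_large.trans hbag_small) (hwidth t₀).not_ge

/-- Let `G` be a graph and `w` a positive integer. If the
tree-cut torso-width of `G` is at most `w`, then there exists no edge-tangle of
order at least `w+1` in `G`. -/
theorem no_edgeTangle_of_torsoWidth_le {V E : Type} [Fintype V] [Fintype E]
    (G : Multigraph V E) (w : ℕ) (hw : 0 < w)
    (h : ∃ (T : Type) (D : TreeCutDecomp G T),
      ∀ t : T, (D.torsoEdges {t}).ncard ≤ w) :
    ∀ θ : ℕ, w + 1 ≤ θ → IsEmpty (EdgeTangle G θ) :=
  no_edgeTangle_of_torsoWidth_le_general G w h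
end

section
/- Let ξ be a positive integer and (T,𝒳) a ξ-nice tree-cut decomposition of a graph G. Then either (1) there exists an edge e = t1t2 of T such that for each i ∈ {1,2}, at least |E(G)|/3 edges of G are incident with A_{e,t_i} and G[A_{e,t_i}] is a ξ-nice graph with at least |E(G)|/3 − ξ edges, or (2) there exists a node t* of T such that either G[X_{t*}] has at least |E(G)|/9 edges, or the components of T − t* can be partitioned into two classes U1, U2 such that for each i, at least 2|E(G)|/9 edges of G are incident with the union of the bags over components in U_i. -/
/-- A tree-cut decomposition is `ξ`-nice if it has adhesion at most `ξ` and for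
every node `t`, the torso at `t` is obtained from a graph on at most `ξ`
vertices by attaching leaves adjacent to `X_t`.  (Components of `T - t`
correspond to the neighbours of `t` in the tree, hence to the peripheral
vertices of the torso at `t`; a peripheral vertex is an attached leaf if its
adhesion set consists of a single edge whose other end lies in `X_t`.) -/
def TreeCutDecomp.IsNice {V E T : Type} {G : Multigraph V E}
    (D : TreeCutDecomp G T) (ξ : ℕ) : Prop :=
  (∀ a b : T, D.tree.Adj a b → (D.adhEdges a b).ncard ≤ ξ) ∧
  ∀ t : T, ∃ S ⊆ D.tree.neighborSet t,
    (∀ s ∈ S, (D.adhEdges t s).ncard = 1 ∧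
      ∀ e ∈ D.adhEdges t s, G.incident (D.bag t) e) ∧
    (D.bag t).ncard + ((D.tree.neighborSet t) \ S).ncard ≤ ξ

/-- A graph is `ξ`-nice if it admits a `ξ`-nice tree-cut decomposition. -/
def IsNiceGraph {V E : Type} (ξ : ℕ) (G : Multigraph V E) : Prop :=
  ∃ (T : Type) (D : TreeCutDecomp G T), D.IsNice ξ

/-- The subgraph of `G` induced by a vertex set `S`. -/
noncomputable def Multigraph.induce {V E : Type} (G : Multigraph V E)
    (S : Set V) : Multigraph {v : V // v ∈ S} {e : E // ∀ x ∈ G.ends e, x ∈ S} where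
  ends e := s(⟨(G.ends e.1).out.1, e.2 _ (Sym2.out_fst_mem _)⟩,
              ⟨(G.ends e.1).out.2, e.2 _ (Sym2.out_snd_mem _)⟩)

/-!
If some bag spans `|E|/9` edges we are done. Otherwise call a tree edge balanced if both of its
sides meet `|E|/3` edges. If there is no balanced edge, orienting every edge towards its heavy
side yields a sink `t*` whose components are all light yet together meet more than `8|E|/9`
edges; a minimal set of components meeting `2|E|/9` edges leaves at least `2|E|/9` to the others.

If `t₁t₂` is balanced and the part of a side beyond its bag `X_{tᵢ}` meets `2|E|/9` edges, the
neighbours of `tᵢ` split into the other endpoint and the rest. Otherwise every edge lies in one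
of five small sets (the two far parts, the two bags, the adhesion), so `|E| < 3ξ` and each side
is small: for `ξ ≥ 3` it spans fewer than `ξ` edges and a path of singleton bags is `ξ`-nice; for
`ξ ≤ 2` no edge meets its far part, a handshake count on the subtree of the side gives at most
`ξ` vertices, and a single bag is `ξ`-nice.
-/

open SimpleGraph

namespace TreeCutDecomp

variable {V E T : Type} {G : Multigraph V E} (D : TreeCutDecomp G T)

theorem side_induction {t₁ t₂ : T} {P : T → Prop} (base : P t₁)
    (step : ∀ p q, p ∈ D.side t₁ t₂ → D.tree.Adj p q → s(p, q) ≠ s(t₁, t₂) → P p → P q) :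
    ∀ u ∈ D.side t₁ t₂, P u := by
  intro u hu
  induction hu with
  | refl => exact base
  | tail hp hpq ih => exact step _ _ hp hpq.1 (by rw [Ne, Sym2.eq_iff]; tauto) ih

theorem self_mem_side (t₁ t₂ : T) : t₁ ∈ D.side t₁ t₂ := Relation.ReflTransGen.refl

variable {D}

theorem mem_side_of_adj {t₁ t₂ p q : T} (hp : p ∈ D.side t₁ t₂) (hpq : D.tree.Adj p q)
    (hne : s(p, q) ≠ s(t₁, t₂)) : q ∈ D.side t₁ t₂ :=
  Relation.ReflTransGen.tail hp ⟨hpq, by rw [Ne, Sym2.eq_iff] at hne; tauto⟩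

theorem reachable_of_mem_side {t₁ t₂ u : T} (hu : u ∈ D.side t₁ t₂) :
    (D.tree.deleteEdges {s(t₁, t₂)}).Reachable t₁ u :=
  D.side_induction Reachable.rfl
    (fun _ _ _ hpq hne ih => ih.trans (Adj.reachable
      (by rw [deleteEdges_adj, Set.mem_singleton_iff]; exact ⟨hpq, hne⟩))) u hu

theorem not_reachable_deleteEdges {t₁ t₂ : T} (h : D.tree.Adj t₁ t₂) :
    ¬ (D.tree.deleteEdges {s(t₁, t₂)}).Reachable t₁ t₂ :=
  isBridge_iff.1 (isAcyclic_iff_forall_adj_isBridge.1 D.isTree.isAcyclic h)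

theorem not_mem_side {t₁ t₂ : T} (h : D.tree.Adj t₁ t₂) : t₂ ∉ D.side t₁ t₂ :=
  fun ht => not_reachable_deleteEdges h (reachable_of_mem_side ht)

theorem ne_of_mem_side {t₁ t₂ u : T} (h : D.tree.Adj t₁ t₂) (hu : u ∈ D.side t₁ t₂) : u ≠ t₂ :=
  fun hut => not_mem_side h (hut ▸ hu)

theorem disjoint_side {t₁ t₂ : T} (h : D.tree.Adj t₁ t₂) : Disjoint (D.side t₁ t₂) (D.side t₂ t₁) :=
  Set.disjoint_left.2 fun _ hu₁ hu₂ => not_reachable_deleteEdges h <|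
    (reachable_of_mem_side hu₁).trans
      (by simpa [Sym2.eq_swap] using (reachable_of_mem_side hu₂).symm)

theorem mem_side_or_mem_side (t₁ t₂ u : T) : u ∈ D.side t₁ t₂ ∨ u ∈ D.side t₂ t₁ := by
  induction (reachable_iff_reflTransGen _ _).1 (D.isTree.connected t₁ u) with
  | refl => exact Or.inl (D.self_mem_side t₁ t₂)
  | @tail x y _ hxy ih =>
    by_cases he : s(x, y) = s(t₁, t₂)
    · rcases Sym2.eq_iff.1 he with ⟨-, rfl⟩ | ⟨-, rfl⟩
      · exact Or.inr (D.self_mem_side _ _)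
      · exact Or.inl (D.self_mem_side _ _)
    · exact ih.imp (mem_side_of_adj · hxy he)
        (mem_side_of_adj · hxy (by rwa [Sym2.eq_swap (a := t₂)]))

theorem side_subset_side {t₁ t₂ c : T} (h : D.tree.Adj t₁ t₂) (hc : D.tree.Adj t₂ c)
    (hct : c ≠ t₁) : D.side c t₂ ⊆ D.side t₂ t₁ := by
  refine D.side_induction (mem_side_of_adj (D.self_mem_side _ _) hc ?_) fun p q hp hpq _ ih => ?_
  · simp [hct, hc.ne.symm]
  · refine mem_side_of_adj ih hpq ?_
    have : p ≠ t₁ := fun hpt => not_mem_side h.symm (hpt ▸ ih)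
    simp [ne_of_mem_side hc.symm hp, this]

theorem exists_adj_mem_side {t u : T} (hu : u ≠ t) : ∃ s, D.tree.Adj t s ∧ u ∈ D.side s t := by
  suffices ∀ w, Relation.ReflTransGen D.tree.Adj t w → w = t ∨ ∃ s, D.tree.Adj t s ∧ w ∈ D.side s t
    from (this u ((reachable_iff_reflTransGen _ _).1 (D.isTree.connected t u))).resolve_left hu
  intro w hw
  induction hw with
  | refl => exact Or.inl rfl
  | @tail x y _ hxy ih =>
    by_cases hyt : y = t
    · exact Or.inl hyt
    rcases ih with rfl | ⟨s, hs, hx⟩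
    · exact Or.inr ⟨y, hxy, D.self_mem_side _ _⟩
    · refine Or.inr ⟨s, hs, mem_side_of_adj hx hxy ?_⟩
      simp [hyt, ne_of_mem_side hs.symm hx]

theorem side_subset_compRel {t s : T} (h : D.tree.Adj t s) :
    D.side s t ⊆ {u | D.compRel {t} s u} :=
  D.side_induction Relation.ReflTransGen.refl fun _ _ hp hpq hne ih =>
    Relation.ReflTransGen.tail ih ⟨hpq, ne_of_mem_side h.symm hp,
      ne_of_mem_side h.symm (mem_side_of_adj hp hpq hne)⟩

theorem isTree_induce_side (t₁ t₂ : T) : (D.tree.induce (D.side t₁ t₂)).IsTree := by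
  let r : D.side t₁ t₂ := ⟨t₁, D.self_mem_side _ _⟩
  have hr : ∀ u ∈ D.side t₁ t₂, ∀ hu, (D.tree.induce (D.side t₁ t₂)).Reachable r ⟨u, hu⟩ :=
    D.side_induction (fun _ => Reachable.rfl) fun _ _ hp hpq _ ih _ =>
      (ih hp).trans (Adj.reachable (by simpa using hpq))
  exact ⟨(connected_iff_exists_forall_reachable _).2 ⟨r, fun u => hr u u.2 u.2⟩,
    D.isTree.isAcyclic.induce _⟩

end TreeCutDecomp

namespace Multigraph

variable {V E : Type} (G : Multigraph V E)

theorem incident_mono {A B : Set V} (h : A ⊆ B) {e : E} (he : G.incident A e) :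
    G.incident B e :=
  let ⟨x, hx, hxA⟩ := he
  ⟨x, hx, h hxA⟩

theorem incident_iUnion {ι : Sort*} {A : ι → Set V} {e : E} :
    G.incident (⋃ i, A i) e ↔ ∃ i, G.incident (A i) e := by
  simp only [incident, Set.mem_iUnion]
  exact ⟨fun ⟨x, hx, i, hi⟩ => ⟨i, x, hx, hi⟩, fun ⟨i, x, hx, hi⟩ => ⟨x, hx, i, hi⟩⟩

theorem ncard_incident_mono [Finite E] {A B : Set V} (h : A ⊆ B) :
    {e | G.incident A e}.ncard ≤ {e | G.incident B e}.ncard :=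
  Set.ncard_le_ncard (fun _ => G.incident_mono h)

end Multigraph

namespace TreeCutDecomp

variable {V E T : Type} {G : Multigraph V E} {D : TreeCutDecomp G T}

theorem mem_sideBags {t₁ t₂ : T} {x : V} :
    x ∈ D.sideBags t₁ t₂ ↔ ∃ u ∈ D.side t₁ t₂, x ∈ D.bag u := by
  simp [sideBags]

theorem bag_subset_sideBags {t₁ t₂ u : T} (hu : u ∈ D.side t₁ t₂) :
    D.bag u ⊆ D.sideBags t₁ t₂ :=
  Set.subset_biUnion_of_mem (u := D.bag) hu

theorem mem_sideBags_or_mem_sideBags (t₁ t₂ : T) (x : V) :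
    x ∈ D.sideBags t₁ t₂ ∨ x ∈ D.sideBags t₂ t₁ := by
  obtain ⟨u, hu⟩ := D.cover x
  exact (mem_side_or_mem_side t₁ t₂ u).imp (bag_subset_sideBags · hu) (bag_subset_sideBags · hu)

theorem disjoint_sideBags {t₁ t₂ : T} (h : D.tree.Adj t₁ t₂) :
    Disjoint (D.sideBags t₁ t₂) (D.sideBags t₂ t₁) := by
  refine Set.disjoint_left.2 fun x hx₁ hx₂ => ?_
  obtain ⟨u, hu, hxu⟩ := mem_sideBags.1 hx₁
  obtain ⟨w, hw, hxw⟩ := mem_sideBags.1 hx₂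
  have huw : u ≠ w := fun huw => Set.disjoint_left.1 (disjoint_side h) hu (huw ▸ hw)
  exact Set.disjoint_left.1 (D.disjoint_bags u w huw) hxu hxw

theorem bag_subset_sideBags_diff_bag {t₁ t₂ u : T} (hu : u ∈ D.side t₂ t₁) (hut : u ≠ t₂) :
    D.bag u ⊆ D.sideBags t₂ t₁ \ D.bag t₂ :=
  fun _ hx => ⟨bag_subset_sideBags hu hx, Set.disjoint_left.1 (D.disjoint_bags u t₂ hut) hx⟩

theorem sideBags_subset_sideBags_diff_bag {t₁ t₂ c : T} (h : D.tree.Adj t₁ t₂)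
    (hc : D.tree.Adj t₂ c) (hct : c ≠ t₁) :
    D.sideBags c t₂ ⊆ D.sideBags t₂ t₁ \ D.bag t₂ := fun _ hx =>
  let ⟨_, hu, hxu⟩ := mem_sideBags.1 hx
  bag_subset_sideBags_diff_bag (side_subset_side h hc hct hu) (ne_of_mem_side hc.symm hu) hxu

theorem exists_adj_mem_sideBags {t : T} {x : V} (hx : x ∉ D.bag t) :
    ∃ s, D.tree.Adj t s ∧ x ∈ D.sideBags s t := by
  obtain ⟨u, hu⟩ := D.cover x
  obtain ⟨s, hs, hus⟩ := exists_adj_mem_side (D := D) fun hut : u = t => hx (hut ▸ hu)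
  exact ⟨s, hs, bag_subset_sideBags hus hu⟩

theorem sideBags_diff_bag_subset {t₁ t₂ : T} (h : D.tree.Adj t₁ t₂) :
    D.sideBags t₂ t₁ \ D.bag t₂ ⊆ ⋃ s ∈ D.tree.neighborSet t₂ \ {t₁}, D.sideBags s t₂ := by
  rintro x ⟨hx, hx₂⟩
  obtain ⟨s, hs, hxs⟩ := exists_adj_mem_sideBags hx₂
  have hst : s ≠ t₁ := by
    rintro rfl
    exact Set.disjoint_left.1 (disjoint_sideBags h) hxs hx
  exact Set.mem_biUnion (x := s) ⟨hs, hst⟩ hxs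

theorem sideBags_subset_compBags {t s : T} (h : D.tree.Adj t s) :
    D.sideBags s t ⊆ D.compBags {t} s :=
  Set.biUnion_subset_biUnion_left (side_subset_compRel h)

theorem card_le_ncard_add_adhEdges [Finite E] (t₁ t₂ : T) :
    Nat.card E ≤ {e | G.incident (D.sideBags t₁ t₂ \ D.bag t₁) e}.ncard +
      {e | G.incident (D.sideBags t₂ t₁ \ D.bag t₂) e}.ncard +
      {e | ∀ x ∈ G.ends e, x ∈ D.bag t₁}.ncard + {e | ∀ x ∈ G.ends e, x ∈ D.bag t₂}.ncard +
      (D.adhEdges t₁ t₂).ncard := by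
  set S₁ := {e | G.incident (D.sideBags t₁ t₂ \ D.bag t₁) e}
  set S₂ := {e | G.incident (D.sideBags t₂ t₁ \ D.bag t₂) e}
  set S₃ := {e | ∀ x ∈ G.ends e, x ∈ D.bag t₁}
  set S₄ := {e | ∀ x ∈ G.ends e, x ∈ D.bag t₂}
  have hcover : Set.univ ⊆ S₁ ∪ S₂ ∪ S₃ ∪ S₄ ∪ D.adhEdges t₁ t₂ := by
    intro e _
    by_contra he
    simp only [Set.mem_union, not_or] at he
    obtain ⟨⟨⟨⟨h₁, h₂⟩, h₃⟩, h₄⟩, h₅⟩ := he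
    have hends : ∀ x ∈ G.ends e, x ∈ D.bag t₁ ∨ x ∈ D.bag t₂ := fun x hx => by
      rcases mem_sideBags_or_mem_sideBags t₁ t₂ x with hx' | hx'
      · exact Or.inl (by_contra fun hx₁ => h₁ ⟨x, hx, hx', hx₁⟩)
      · exact Or.inr (by_contra fun hx₂ => h₂ ⟨x, hx, hx', hx₂⟩)
    simp only [S₃, S₄, Set.mem_ofPred_eq, not_forall] at h₃ h₄
    obtain ⟨y, hy, hy₁⟩ := h₃
    obtain ⟨z, hz, hz₂⟩ := h₄
    exact h₅ ⟨⟨z, hz, bag_subset_sideBags (D.self_mem_side _ _) ((hends z hz).resolve_right hz₂)⟩,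
      ⟨y, hy, bag_subset_sideBags (D.self_mem_side _ _) ((hends y hy).resolve_left hy₁)⟩⟩
  have := Set.ncard_union_le (S₁ ∪ S₂ ∪ S₃ ∪ S₄) (D.adhEdges t₁ t₂)
  have := Set.ncard_union_le (S₁ ∪ S₂ ∪ S₃) S₄
  have := Set.ncard_union_le (S₁ ∪ S₂) S₃
  have := Set.ncard_union_le S₁ S₂
  have := Set.ncard_le_ncard hcover
  rw [Set.ncard_univ] at this
  omega

end TreeCutDecomp

theorem SimpleGraph.pathGraph_isAcyclic (n : ℕ) : (pathGraph n).IsAcyclic := by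
  refine isAcyclic_iff_forall_adj_isBridge.2 fun u v huv => ?_
  wlog h : u.val + 1 = v.val generalizing u v
  · rw [Sym2.eq_swap]
    exact this v u huv.symm ((pathGraph_adj.1 huv).resolve_left h)
  refine isBridge_iff.2 fun ⟨p⟩ => ?_
  obtain ⟨d, -, hd₁, hd₂⟩ := p.exists_boundary_dart {w | w.val ≤ u.val} (by simp) (by simp; omega)
  have hd := d.adj
  simp only [deleteEdges_adj, pathGraph_adj, Set.mem_singleton_iff] at hd
  simp only [Set.mem_ofPred_eq] at hd₁ hd₂
  have h₁ : d.fst = u := Fin.ext (by omega)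
  have h₂ : d.snd = v := Fin.ext (by omega)
  exact hd.2 (by rw [h₁, h₂])

theorem SimpleGraph.ncard_neighborSet_pathGraph_le {n : ℕ} (i : Fin n) :
    ((pathGraph n).neighborSet i).ncard ≤ 2 := by
  calc ((pathGraph n).neighborSet i).ncard
      = (Fin.val '' (pathGraph n).neighborSet i).ncard :=
        (Set.ncard_image_of_injective _ Fin.val_injective).symm
    _ ≤ ({i.val - 1, i.val + 1} : Set ℕ).ncard := by
        refine Set.ncard_le_ncard ?_ (Set.toFinite _)
        rintro _ ⟨j, hj, rfl⟩
        rw [mem_neighborSet, pathGraph_adj] at hj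
        simp only [Set.mem_insert_iff, Set.mem_singleton_iff]
        omega
    _ ≤ 2 := (Set.ncard_insert_le _ _).trans (by simp)

theorem isNiceGraph_of_card_le {V E : Type} (G : Multigraph V E) {ξ : ℕ} (h : Nat.card V ≤ ξ) :
    IsNiceGraph ξ G := by
  refine ⟨Unit, ⟨⊥, .of_subsingleton, inferInstance, fun _ => Set.univ,
    fun _ _ hst => (hst rfl).elim, fun _ => ⟨(), trivial⟩⟩, fun _ _ hab => hab.elim,
    fun _ => ⟨∅, by simp, by simp, ?_⟩⟩
  simpa [Set.ncard_univ] using h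

theorem isNiceGraph_of_card_edges_le {V E : Type} [Finite V] [Finite E] (G : Multigraph V E)
    {ξ : ℕ} (hξ : 3 ≤ ξ) (hE : Nat.card E ≤ ξ) : IsNiceGraph ξ G := by
  have := Fintype.ofFinite V
  let e := Fintype.equivFin V
  -- singleton bags along a path; the extra last node has an empty bag and keeps the path nonempty
  refine ⟨Fin (Fintype.card V + 1), ⟨pathGraph _, ⟨pathGraph_connected _, pathGraph_isAcyclic _⟩,
    inferInstance, fun i => {x | (e x).castSucc = i}, fun s t hst => ?_, fun x => ⟨_, rfl⟩⟩,
    fun _ _ _ => ?_, fun i => ⟨∅, by simp, by simp, ?_⟩⟩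
  · exact Set.disjoint_left.2 fun x hs ht => hst (hs.symm.trans ht)
  · exact (Set.ncard_le_ncard (Set.subset_univ _)).trans (by rwa [Set.ncard_univ])
  · have hbag : {x | (e x).castSucc = i}.ncard ≤ 1 :=
      (Set.ncard_le_one (Set.toFinite _)).2 fun x hx y hy =>
        e.injective (Fin.castSucc_injective _ (hx.trans hy.symm))
    have := ncard_neighborSet_pathGraph_le i
    simp only [Set.sdiff_empty]
    omega

namespace TreeCutDecomp

variable {V E T : Type} {G : Multigraph V E} {D : TreeCutDecomp G T}

theorem not_leaf_of_mem_side {t₁ t₂ v w : T} (h : D.tree.Adj t₁ t₂)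
    (hfar : ∀ e, ¬ G.incident (D.sideBags t₂ t₁ \ D.bag t₂) e)
    (hv : v ∈ D.side t₂ t₁) (hw : w ∈ D.side t₂ t₁) (hvw : D.tree.Adj v w) :
    ¬ ((D.adhEdges v w).ncard = 1 ∧ ∀ e ∈ D.adhEdges v w, G.incident (D.bag v) e) := by
  rintro ⟨hcard, hinc⟩
  obtain ⟨f, hf⟩ := Set.nonempty_of_ncard_ne_zero (s := D.adhEdges v w) (by omega)
  by_cases hvt : v = t₂
  · subst hvt
    have hwt : w ≠ t₁ := fun hwt => not_mem_side h.symm (hwt ▸ hw)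
    exact hfar f (G.incident_mono (sideBags_subset_sideBags_diff_bag h hvw hwt) hf.2)
  · exact hfar f (G.incident_mono (bag_subset_sideBags_diff_bag hv hvt) (hinc f hf))

/-- No node of the side has a leaf neighbour inside the side, so `|X_v| + deg v ≤ ξ` in the
subtree induced by the side; summing against `∑ deg = 2 (n - 1)` gives the bound as `ξ ≤ 2`. -/
theorem ncard_sideBags_le {ξ : ℕ} (hξ : ξ ≤ 2) (hD : D.IsNice ξ) {t₁ t₂ : T}
    (h : D.tree.Adj t₁ t₂) (hfar : ∀ e, ¬ G.incident (D.sideBags t₂ t₁ \ D.bag t₂) e) :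
    (D.sideBags t₂ t₁).ncard ≤ ξ := by
  classical
  have := D.finite
  have := Fintype.ofFinite T
  set P := D.side t₂ t₁
  let Γ := D.tree.induce P
  have hbudget : ∀ v : P, (D.bag v).ncard + Γ.degree v ≤ ξ := by
    intro v
    obtain ⟨S, -, hS, hbud⟩ := hD.2 v
    have hdeg : Γ.degree v ≤ (D.tree.neighborSet v \ S).ncard := by
      rw [← card_neighborFinset_eq_degree, neighborFinset_def, ← Set.ncard_eq_toFinset_card']
      refine Set.ncard_le_ncard_of_injOn Subtype.val (fun w hw => ?_)
        Subtype.val_injective.injOn (Set.toFinite _)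
      have hvw : D.tree.Adj v w := by simpa [Γ] using hw
      exact ⟨hvw, fun hwS => not_leaf_of_mem_side h hfar v.2 w.2 hvw (hS w hwS)⟩
    omega
  have hsum : ∑ v : P, (D.bag v).ncard + 2 * Γ.edgeFinset.card ≤ Fintype.card P * ξ := by
    rw [← sum_degrees_eq_twice_card_edges, ← Finset.sum_add_distrib, ← smul_eq_mul,
      ← Finset.card_univ, ← Finset.sum_const]
    exact Finset.sum_le_sum fun v _ => hbudget v
  have hedges : Γ.edgeFinset.card + 1 = Fintype.card P :=
    (D.isTree_induce_side t₂ t₁).card_edgeFinset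
  have hbags : (D.sideBags t₂ t₁).ncard ≤ ∑ v : P, (D.bag v).ncard := by
    rw [sideBags, Set.biUnion_eq_iUnion]
    exact Set.ncard_iUnion_le_of_fintype _
  interval_cases ξ <;> omega

end TreeCutDecomp

theorem Finset.exists_subset_le_ncard_biUnion {ι α : Type*} [DecidableEq ι] (N : Finset ι)
    (F : ι → Set α) {k c : ℕ} (hc : ∀ i ∈ N, (F i).ncard ≤ c)
    (hN : 2 * k + c ≤ (⋃ i ∈ N, F i).ncard + 1) :
    ∃ U ⊆ N, k ≤ (⋃ i ∈ U, F i).ncard ∧ k ≤ (⋃ i ∈ N \ U, F i).ncard := by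
  rcases Nat.eq_zero_or_pos k with rfl | hk
  · exact ⟨∅, Finset.empty_subset _, Nat.zero_le _, Nat.zero_le _⟩
  -- a minimal `U` reaching `k` overshoots by less than one piece, so `N \ U` keeps at least `k`
  obtain ⟨U, hU, hUmin⟩ := (N.powerset.filter fun U => k ≤ (⋃ i ∈ U, F i).ncard).exists_min_image
    Finset.card ⟨N, Finset.mem_filter.2 ⟨Finset.mem_powerset.2 subset_rfl, by omega⟩⟩
  rw [Finset.mem_filter, Finset.mem_powerset] at hU
  obtain ⟨i, hi⟩ : U.Nonempty := Finset.nonempty_iff_ne_empty.2 fun hU₀ => by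
    simp only [hU₀, Finset.notMem_empty, Set.iUnion_of_empty, Set.iUnion_empty,
      Set.ncard_empty] at hU
    omega
  have herase : (⋃ j ∈ U.erase i, F j).ncard < k := by
    by_contra! hle
    have := hUmin _ (Finset.mem_filter.2 ⟨Finset.mem_powerset.2
      ((Finset.erase_subset _ _).trans hU.1), hle⟩)
    have := Finset.card_erase_lt_of_mem hi
    omega
  have hUi : ⋃ j ∈ U, F j = F i ∪ ⋃ j ∈ U.erase i, F j := by
    conv_lhs => rw [← Finset.insert_erase hi]
    exact Finset.set_biUnion_insert _ _ _
  have hNU : ⋃ j ∈ N, F j = (⋃ j ∈ U, F j) ∪ ⋃ j ∈ N \ U, F j := by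
    rw [← Finset.set_biUnion_union, Finset.union_sdiff_of_subset hU.1]
  have h₁ : (⋃ j ∈ U, F j).ncard ≤ (F i).ncard + (⋃ j ∈ U.erase i, F j).ncard :=
    hUi ▸ Set.ncard_union_le _ _
  have h₂ : (⋃ j ∈ N, F j).ncard ≤ (⋃ j ∈ U, F j).ncard + (⋃ j ∈ N \ U, F j).ncard :=
    hNU ▸ Set.ncard_union_le _ _
  have := hc i (hU.1 hi)
  exact ⟨U, hU.1, hU.2, by omega⟩

namespace TreeCutDecomp

variable {V E T : Type} {G : Multigraph V E} {D : TreeCutDecomp G T}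

theorem exists_sink {L : T → T → Prop} (hL : ∀ a b, D.tree.Adj a b → L a b ∨ L b a) :
    ∃ t, ∀ s, D.tree.Adj t s → L s t := by
  classical
  have := D.finite
  have := Fintype.ofFinite T
  let P := (Finset.univ : Finset (T × T)).filter fun p => D.tree.Adj p.1 p.2 ∧ L p.1 p.2
  rcases P.eq_empty_or_nonempty with hP | hP
  · obtain ⟨t⟩ := D.isTree.connected.nonempty
    refine ⟨t, fun s hts => (hL t s hts).resolve_left fun hts' => ?_⟩
    simpa [P, hP] using (Finset.mem_filter.2 ⟨Finset.mem_univ (t, s), hts, hts'⟩ : (t, s) ∈ P)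
  -- the sink is the head of an arc whose tail side is as large as possible
  obtain ⟨⟨a, b⟩, hab, hmax⟩ := P.exists_max_image (fun p => (D.side p.1 p.2).ncard) hP
  simp only [P, Finset.mem_filter, Finset.mem_univ, true_and] at hab hmax
  refine ⟨b, fun s hbs => by_contra fun hsb => ?_⟩
  have hsa : s ≠ a := by
    rintro rfl
    exact hsb hab.2
  have hlt : D.side a b ⊂ D.side b s :=
    ⟨side_subset_side hbs.symm hab.1.symm hsa.symm,
      fun hsub => not_mem_side hab.1 (hsub (D.self_mem_side b s))⟩
  exact (Set.ncard_lt_ncard hlt).not_ge (hmax (b, s) ⟨hbs, (hL b s hbs).resolve_right hsb⟩)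

variable (D) in
/-- The second alternative of outcome (2), at the node `t`. -/
def HasBalancedSplit (t : T) : Prop :=
  ∃ U₁ U₂ : Set T, U₁ ∪ U₂ = D.tree.neighborSet t ∧ Disjoint U₁ U₂ ∧
    2 * Nat.card E ≤ 9 * {e : E | G.incident (⋃ s ∈ U₁, D.compBags {t} s) e}.ncard ∧
    2 * Nat.card E ≤ 9 * {e : E | G.incident (⋃ s ∈ U₂, D.compBags {t} s) e}.ncard

theorem hasBalancedSplit_of_sideBags [Finite E] {t : T} {U₁ U₂ : Set T}
    (hU : U₁ ∪ U₂ = D.tree.neighborSet t) (hdisj : Disjoint U₁ U₂)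
    (h₁ : 2 * Nat.card E ≤ 9 * {e | G.incident (⋃ s ∈ U₁, D.sideBags s t) e}.ncard)
    (h₂ : 2 * Nat.card E ≤ 9 * {e | G.incident (⋃ s ∈ U₂, D.sideBags s t) e}.ncard) :
    D.HasBalancedSplit t := by
  have hmono : ∀ U ⊆ D.tree.neighborSet t,
      {e | G.incident (⋃ s ∈ U, D.sideBags s t) e}.ncard ≤
        {e | G.incident (⋃ s ∈ U, D.compBags {t} s) e}.ncard := fun U hU =>
    G.ncard_incident_mono (Set.biUnion_mono subset_rfl fun s hs => sideBags_subset_compBags (hU hs))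
  have := hmono U₁ (hU ▸ Set.subset_union_left)
  have := hmono U₂ (hU ▸ Set.subset_union_right)
  exact ⟨U₁, U₂, hU, hdisj, by omega, by omega⟩

theorem hasBalancedSplit_of_far [Finite E] {t₁ t₂ : T} (h : D.tree.Adj t₁ t₂)
    (h₁ : 2 * Nat.card E ≤ 9 * {e | G.incident (D.sideBags t₁ t₂) e}.ncard)
    (h₂ : 2 * Nat.card E ≤ 9 * {e | G.incident (D.sideBags t₂ t₁ \ D.bag t₂) e}.ncard) :
    D.HasBalancedSplit t₂ := by
  refine hasBalancedSplit_of_sideBags (U₁ := {t₁}) (U₂ := D.tree.neighborSet t₂ \ {t₁})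
    (Set.union_sdiff_cancel (by simpa using h.symm)) Set.disjoint_sdiff_right (by simpa using h₁)
    (h₂.trans ?_)
  have := G.ncard_incident_mono (sideBags_diff_bag_subset h)
  omega

theorem hasBalancedSplit_of_light [Finite E] {t : T}
    (hbag : 9 * {e | ∀ x ∈ G.ends e, x ∈ D.bag t}.ncard < Nat.card E)
    (hlight : ∀ s, D.tree.Adj t s → 3 * {e | G.incident (D.sideBags s t) e}.ncard < Nat.card E) :
    D.HasBalancedSplit t := by
  classical
  have := D.finite
  have := Fintype.ofFinite T
  let N := D.tree.neighborFinset t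
  let F : T → Set E := fun s => {e | G.incident (D.sideBags s t) e}
  have hF : ∀ U : Finset T,
      ⋃ s ∈ U, F s = {e | G.incident (⋃ s ∈ (U : Set T), D.sideBags s t) e} := by
    intro U
    ext e
    simp [F, Multigraph.incident_iUnion]
  have hcover : Set.univ ⊆ {e | ∀ x ∈ G.ends e, x ∈ D.bag t} ∪ ⋃ s ∈ N, F s := by
    intro e _
    by_contra he
    simp only [Set.mem_union, Set.mem_ofPred_eq, not_or, not_forall] at he
    obtain ⟨⟨x, hx, hxt⟩, hN⟩ := he
    obtain ⟨s, hs, hxs⟩ := exists_adj_mem_sideBags hxt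
    exact hN (Set.mem_biUnion (by simpa [N] using hs) ⟨x, hx, hxs⟩)
  have hcard := (Set.ncard_le_ncard hcover).trans (Set.ncard_union_le _ _)
  rw [Set.ncard_univ] at hcard
  -- `k = ⌈2|E|/9⌉`, and `c` bounds the light components, which together meet `> 8|E|/9` edges
  obtain ⟨U, hUN, hU, hNU⟩ := N.exists_subset_le_ncard_biUnion F
    (k := (2 * Nat.card E + 8) / 9) (c := (Nat.card E - 1) / 3)
    (fun s hs => by have := hlight s (by simpa [N] using hs); simp only [F]; omega) (by omega)
  refine hasBalancedSplit_of_sideBags (U₁ := U) (U₂ := ↑(N \ U)) ?_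
    (Finset.disjoint_coe.2 Finset.disjoint_sdiff) ?_ ?_
  · rw [← Finset.coe_union, Finset.union_sdiff_of_subset hUN, coe_neighborFinset]
  · rw [← hF]
    omega
  · rw [← hF]
    omega

theorem isNiceGraph_induce_sideBags [Finite V] [Finite E] {ξ : ℕ} (hD : D.IsNice ξ)
    {t₁ t₂ : T} (h : D.tree.Adj t₁ t₂) (hm : 3 * Nat.card E + 4 ≤ 9 * ξ)
    (hfar : 9 * {e | G.incident (D.sideBags t₂ t₁ \ D.bag t₂) e}.ncard < 2 * Nat.card E)
    (hbag : 9 * {e | ∀ x ∈ G.ends e, x ∈ D.bag t₂}.ncard < Nat.card E) :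
    IsNiceGraph ξ (G.induce (D.sideBags t₂ t₁)) := by
  by_cases hξ : 3 ≤ ξ
  · refine isNiceGraph_of_card_edges_le _ hξ ?_
    have hsub : {e | ∀ x ∈ G.ends e, x ∈ D.sideBags t₂ t₁} ⊆
        {e | G.incident (D.sideBags t₂ t₁ \ D.bag t₂) e} ∪ {e | ∀ x ∈ G.ends e, x ∈ D.bag t₂} :=
      fun e he => or_iff_not_imp_right.2 fun he₂ => by
        simp only [Set.mem_ofPred_eq, not_forall] at he₂
        obtain ⟨x, hx, hx₂⟩ := he₂
        exact ⟨x, hx, he x hx, hx₂⟩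
    have := (Set.ncard_le_ncard hsub).trans (Set.ncard_union_le _ _)
    change Nat.card {e : E | ∀ x ∈ G.ends e, x ∈ D.sideBags t₂ t₁} ≤ ξ
    rw [Nat.card_coe_set_eq]
    omega
  · refine isNiceGraph_of_card_le _ ?_
    rw [Nat.card_coe_set_eq]
    refine ncard_sideBags_le (by omega) hD h fun e he => ?_
    have := Set.ncard_ne_zero_of_mem (s := {e | G.incident (D.sideBags t₂ t₁ \ D.bag t₂) e}) he
    omega

end TreeCutDecomp

open TreeCutDecomp in
theorem nice_tree_cut_sep_general {V E : Type} [Fintype V] [Fintype E]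
    (ξ : ℕ) (G : Multigraph V E)
    {T : Type} (D : TreeCutDecomp G T) (hD : D.IsNice ξ) :
    (∃ t₁ t₂ : T, D.tree.Adj t₁ t₂ ∧
      (Nat.card E ≤ 3 * {e : E | G.incident (D.sideBags t₂ t₁) e}.ncard ∧
        IsNiceGraph ξ (G.induce (D.sideBags t₂ t₁)) ∧
        Nat.card E ≤ 3 * ({e : E | ∀ x ∈ G.ends e, x ∈ D.sideBags t₂ t₁}.ncard + ξ)) ∧
      (Nat.card E ≤ 3 * {e : E | G.incident (D.sideBags t₁ t₂) e}.ncard ∧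
        IsNiceGraph ξ (G.induce (D.sideBags t₁ t₂)) ∧
        Nat.card E ≤ 3 * ({e : E | ∀ x ∈ G.ends e, x ∈ D.sideBags t₁ t₂}.ncard + ξ))) ∨
    (∃ tstar : T,
      Nat.card E ≤ 9 * {e : E | ∀ x ∈ G.ends e, x ∈ D.bag tstar}.ncard ∨
      ∃ U₁ U₂ : Set T, U₁ ∪ U₂ = D.tree.neighborSet tstar ∧ Disjoint U₁ U₂ ∧
        2 * Nat.card E ≤
          9 * {e : E | G.incident (⋃ s ∈ U₁, D.compBags {tstar} s) e}.ncard ∧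
        2 * Nat.card E ≤
          9 * {e : E | G.incident (⋃ s ∈ U₂, D.compBags {tstar} s) e}.ncard) := by
  by_cases hbag : ∃ t, Nat.card E ≤ 9 * {e : E | ∀ x ∈ G.ends e, x ∈ D.bag t}.ncard
  · obtain ⟨t, ht⟩ := hbag
    exact Or.inr ⟨t, Or.inl ht⟩
  push Not at hbag
  by_cases hbal : ∃ t₁ t₂, D.tree.Adj t₁ t₂ ∧
      Nat.card E ≤ 3 * {e | G.incident (D.sideBags t₂ t₁) e}.ncard ∧
      Nat.card E ≤ 3 * {e | G.incident (D.sideBags t₁ t₂) e}.ncard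
  · obtain ⟨t₁, t₂, h, h₂, h₁⟩ := hbal
    by_cases hfar₂ : 2 * Nat.card E ≤ 9 * {e | G.incident (D.sideBags t₂ t₁ \ D.bag t₂) e}.ncard
    · exact Or.inr ⟨t₂, Or.inr (hasBalancedSplit_of_far h (by omega) hfar₂)⟩
    by_cases hfar₁ : 2 * Nat.card E ≤ 9 * {e | G.incident (D.sideBags t₁ t₂ \ D.bag t₁) e}.ncard
    · exact Or.inr ⟨t₁, Or.inr (hasBalancedSplit_of_far h.symm (by omega) hfar₁)⟩
    have hm : 3 * Nat.card E + 4 ≤ 9 * ξ := by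
      have := D.card_le_ncard_add_adhEdges t₁ t₂
      have := hD.1 t₁ t₂ h
      have := hbag t₁
      have := hbag t₂
      omega
    exact Or.inl ⟨t₁, t₂, h,
      ⟨h₂, isNiceGraph_induce_sideBags hD h hm (by omega) (hbag t₂), by omega⟩,
      ⟨h₁, isNiceGraph_induce_sideBags hD h.symm hm (by omega) (hbag t₁), by omega⟩⟩
  · push Not at hbal
    obtain ⟨t, ht⟩ := D.exists_sink
      (L := fun a b => 3 * {e | G.incident (D.sideBags a b) e}.ncard < Nat.card E)
      fun a b h => by have := hbal a b h; omega
    exact Or.inr ⟨t, Or.inr (hasBalancedSplit_of_light (hbag t) ht)⟩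

/-- Let `ξ` be a positive integer and `(T,𝒳)` a `ξ`-nice
tree-cut decomposition of a graph `G`. Then either (1) there exists an edge
`t₁t₂` of `T` such that for each `i ∈ {1,2}`, at least `|E(G)|/3` edges of `G`
are incident with `A_{e,t_i}` and `G[A_{e,t_i}]` is a `ξ`-nice graph with at
least `|E(G)|/3 − ξ` edges, or (2) there exists a node `t*` of `T` such that
either `G[X_{t*}]` has at least `|E(G)|/9` edges, or the components of `T − t*`
can be partitioned into two classes `U₁, U₂` such that for each `i`, at least
`2|E(G)|/9` edges of `G` are incident with the union of the bags over the
components in `U_i`. -/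
theorem nice_tree_cut_sep {V E : Type} [Fintype V] [Fintype E]
    (ξ : ℕ) (hξ : 0 < ξ) (G : Multigraph V E)
    {T : Type} (D : TreeCutDecomp G T) (hD : D.IsNice ξ) :
    (∃ t₁ t₂ : T, D.tree.Adj t₁ t₂ ∧
      (Nat.card E ≤ 3 * {e : E | G.incident (D.sideBags t₂ t₁) e}.ncard ∧
        IsNiceGraph ξ (G.induce (D.sideBags t₂ t₁)) ∧
        Nat.card E ≤ 3 * ({e : E | ∀ x ∈ G.ends e, x ∈ D.sideBags t₂ t₁}.ncard + ξ)) ∧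
      (Nat.card E ≤ 3 * {e : E | G.incident (D.sideBags t₁ t₂) e}.ncard ∧
        IsNiceGraph ξ (G.induce (D.sideBags t₁ t₂)) ∧
        Nat.card E ≤ 3 * ({e : E | ∀ x ∈ G.ends e, x ∈ D.sideBags t₁ t₂}.ncard + ξ))) ∨
    (∃ tstar : T,
      Nat.card E ≤ 9 * {e : E | ∀ x ∈ G.ends e, x ∈ D.bag tstar}.ncard ∨
      ∃ U₁ U₂ : Set T, U₁ ∪ U₂ = D.tree.neighborSet tstar ∧ Disjoint U₁ U₂ ∧
        2 * Nat.card E ≤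
          9 * {e : E | G.incident (⋃ s ∈ U₁, D.compBags {tstar} s) e}.ncard ∧
        2 * Nat.card E ≤
          9 * {e : E | G.incident (⋃ s ∈ U₂, D.compBags {tstar} s) e}.ncard) :=
  nice_tree_cut_sep_general ξ G D hD
end
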